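/- arXiv:1609.08197 — 11 statements merged into one kernel-verified Lean document; each statement's English description precedes it below -/
import Mathlib

section
/- Let μ, γ ∈ ℝ and δ ∈ [-1,1). If U₁, U₂ ∈ C¹((δ,1)) both satisfy the reduced no-swirl equation with parameter μ on (δ,1), and for i = 1, 2 one has lim_{x→1⁻} Uᵢ(x) = 0 and lim_{x→1⁻} Uᵢ'(x) = γ, then U₁(x) = U₂(x) for all x ∈ (δ,1). -/
/-!
For two solutions, `w = U₁ - U₂` satisfies the linear equation
`(1 - x²) w' + (2x + (U₁ + U₂)/2) w = 0`, whose coefficient is singular at `x = 1`. Dividing by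
`1 - x` removes the singularity: `g = w / (1 - x)` satisfies `g' = b g` with `b` continuous on
`(δ, 1)`, and since `Uᵢ / (1 - x) → -γ` by l'Hôpital, both `g → 0` and `b → (1 + γ)/2` at `1`.
So `b ≥ m` on `[x₀, 1)` for some `m`, and then `g² e^{-2mx}` is nondecreasing on `[x₀, 1)` with
limit `0`, forcing `g x₀ = 0`.
-/

open Set Filter Topology

theorem eq_zero_of_hasDerivAt_mul_of_tendsto_zero {g b : ℝ → ℝ} {a c m : ℝ} (hac : a < c)
    (hg : ∀ x ∈ Ico a c, HasDerivAt g (b x * g x) x) (hb : ∀ x ∈ Ico a c, m ≤ b x)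
    (hlim : Tendsto g (𝓝[<] c) (𝓝 0)) : g a = 0 := by
  set φ : ℝ → ℝ := fun x => g x ^ 2 * Real.exp (-(2 * m) * x)
  have hφ : ∀ x ∈ Ico a c,
      HasDerivAt φ (2 * (b x - m) * g x ^ 2 * Real.exp (-(2 * m) * x)) x := by
    intro x hx
    refine (((hg x hx).pow 2).mul ((hasDerivAt_const_mul (-(2 * m))).exp)).congr_deriv ?_
    simp only [Pi.pow_apply]
    push_cast
    ring
  have hmono : MonotoneOn φ (Ico a c) := by
    refine monotoneOn_of_hasDerivWithinAt_nonneg (convex_Ico a c)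
      (fun x hx => (hφ x hx).continuousAt.continuousWithinAt)
      (fun x hx => (hφ x (interior_subset hx)).hasDerivWithinAt) fun x hx => ?_
    have := sub_nonneg.2 (hb x (interior_subset hx))
    positivity
  have hφlim : Tendsto φ (𝓝[<] c) (𝓝 0) := by
    have hexp : Tendsto (fun x => Real.exp (-(2 * m) * x)) (𝓝[<] c)
        (𝓝 (Real.exp (-(2 * m) * c))) :=
      (Continuous.tendsto (by fun_prop) c).mono_left nhdsWithin_le_nhds
    have := (hlim.pow 2).mul hexp
    rwa [zero_pow two_ne_zero, zero_mul] at this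
  have hφa : φ a ≤ 0 := ge_of_tendsto hφlim <| by
    filter_upwards [Ico_mem_nhdsLT hac] with x hx
    exact hmono (left_mem_Ico.2 hac) hx hx.1
  have : g a ^ 2 ≤ 0 := nonpos_of_mul_nonpos_left hφa (Real.exp_pos _)
  exact pow_eq_zero_iff two_ne_zero |>.1 (le_antisymm this (sq_nonneg _))

theorem bddBelow_image_Ico_of_tendsto {f : ℝ → ℝ} {a c L : ℝ} (hf : ContinuousOn f (Ico a c))
    (hlim : Tendsto f (𝓝[<] c) (𝓝 L)) : BddBelow (f '' Ico a c) := by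
  obtain ⟨d, hdc, hd⟩ := mem_nhdsLT_iff_exists_Ioo_subset.1
    (hlim.eventually (eventually_gt_nhds (sub_one_lt L)))
  have hsplit : Ico a c ⊆ Icc a d ∪ Ioo d c := fun x hx =>
    (le_or_gt x d).imp (fun h => ⟨hx.1, h⟩) fun h => ⟨h, hx.2⟩
  have hleft : BddBelow (f '' Icc a d) :=
    isCompact_Icc.bddBelow_image (hf.mono fun x hx => ⟨hx.1, hx.2.trans_lt hdc⟩)
  have hright : BddBelow (f '' Ioo d c) :=
    ⟨L - 1, forall_mem_image.2 fun x hx => (hd hx).le⟩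
  exact (hleft.union hright).mono ((image_mono hsplit).trans (image_union f _ _).le)

theorem tendsto_div_sub_of_tendsto_deriv {U U' : ℝ → ℝ} {c γ : ℝ}
    (hU : ∀ᶠ x in 𝓝[<] c, HasDerivAt U (U' x) x) (h0 : Tendsto U (𝓝[<] c) (𝓝 0))
    (hγ : Tendsto U' (𝓝[<] c) (𝓝 γ)) :
    Tendsto (fun x => U x / (c - x)) (𝓝[<] c) (𝓝 (-γ)) := by
  refine HasDerivAt.lhopital_zero_nhdsLT (g' := fun _ => -1) hU
    (Eventually.of_forall fun x => (hasDerivAt_id x).const_sub c)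
    (Eventually.of_forall fun _ => neg_ne_zero.2 one_ne_zero) h0 ?_ ?_
  · simpa using ((continuous_sub_left c).tendsto c).mono_left nhdsWithin_le_nhds
  · simpa only [div_neg, div_one] using hγ.neg

noncomputable def noSwirlCoeff (U₁ U₂ : ℝ → ℝ) (x : ℝ) : ℝ :=
  (1 - (U₁ x + U₂ x) / (2 * (1 - x))) / (1 + x)

theorem hasDerivAt_sub_div_one_sub {U₁ U₂ : ℝ → ℝ} {μ v₁ v₂ x : ℝ} (hx : x ∈ Ioo (-1) 1)
    (h₁ : HasDerivAt U₁ v₁ x) (h₂ : HasDerivAt U₂ v₂ x)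
    (e₁ : (1 - x ^ 2) * v₁ + 2 * x * U₁ x + (1 / 2) * U₁ x ^ 2 = μ * (1 - x) ^ 2)
    (e₂ : (1 - x ^ 2) * v₂ + 2 * x * U₂ x + (1 / 2) * U₂ x ^ 2 = μ * (1 - x) ^ 2) :
    HasDerivAt (fun y => (U₁ y - U₂ y) / (1 - y))
      (noSwirlCoeff U₁ U₂ x * ((U₁ x - U₂ x) / (1 - x))) x := by
  have hx₁ : 1 - x ≠ 0 := by linarith [hx.2]
  have hx₂ : 1 + x ≠ 0 := by linarith [hx.1]
  refine ((h₁.sub h₂).div ((hasDerivAt_id x).const_sub 1) hx₁).congr_deriv ?_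
  simp only [noSwirlCoeff, Pi.sub_apply, id]
  field_simp
  linear_combination 2 * (e₁ - e₂)

theorem continuousOn_noSwirlCoeff {U₁ U₂ : ℝ → ℝ} {s : Set ℝ} (h₁ : ContinuousOn U₁ s)
    (h₂ : ContinuousOn U₂ s) (hs : s ⊆ Ioo (-1) 1) : ContinuousOn (noSwirlCoeff U₁ U₂) s := by
  refine (continuousOn_const.sub ((h₁.add h₂).div (continuousOn_const.mul
    (continuousOn_const.sub continuousOn_id)) fun x hx => ?_)).div
    (continuousOn_const.add continuousOn_id) fun x hx => ?_
  · exact mul_ne_zero two_ne_zero (sub_pos.2 (hs hx).2).ne'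
  · exact (show (0 : ℝ) < 1 + x by linarith [(hs hx).1]).ne'

theorem tendsto_noSwirlCoeff {U₁ U₂ : ℝ → ℝ} {L₁ L₂ : ℝ}
    (h₁ : Tendsto (fun x => U₁ x / (1 - x)) (𝓝[<] 1) (𝓝 L₁))
    (h₂ : Tendsto (fun x => U₂ x / (1 - x)) (𝓝[<] 1) (𝓝 L₂)) :
    Tendsto (noSwirlCoeff U₁ U₂) (𝓝[<] 1) (𝓝 ((1 - (L₁ + L₂) / 2) / 2)) := by
  have hsum : Tendsto (fun x => (U₁ x + U₂ x) / (2 * (1 - x))) (𝓝[<] 1) (𝓝 ((L₁ + L₂) / 2)) :=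
    ((h₁.add h₂).div_const 2).congr fun x => by rw [← add_div, div_div, mul_comm (1 - x)]
  have hden : Tendsto (fun x : ℝ => 1 + x) (𝓝[<] 1) (𝓝 2) := by
    simpa [one_add_one_eq_two] using
      ((continuous_const_add (1 : ℝ)).tendsto 1).mono_left nhdsWithin_le_nhds
  exact (tendsto_const_nhds.sub hsum).div hden two_ne_zero

theorem stmt0_general (μ γ δ : ℝ) (hδ₁ : -1 ≤ δ)
    (U₁ U₁' U₂ U₂' : ℝ → ℝ)
    (hU₁ : ∀ x ∈ Ioo δ 1, HasDerivAt U₁ (U₁' x) x)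
    (hU₂ : ∀ x ∈ Ioo δ 1, HasDerivAt U₂ (U₂' x) x)
    (heq₁ : ∀ x ∈ Ioo δ 1,
      (1 - x ^ 2) * U₁' x + 2 * x * U₁ x + (1 / 2) * (U₁ x) ^ 2 = μ * (1 - x) ^ 2)
    (heq₂ : ∀ x ∈ Ioo δ 1,
      (1 - x ^ 2) * U₂' x + 2 * x * U₂ x + (1 / 2) * (U₂ x) ^ 2 = μ * (1 - x) ^ 2)
    (hlim₁0 : Tendsto U₁ (𝓝[<] 1) (𝓝 0))
    (hlim₁γ : Tendsto U₁' (𝓝[<] 1) (𝓝 γ))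
    (hlim₂0 : Tendsto U₂ (𝓝[<] 1) (𝓝 0))
    (hlim₂γ : Tendsto U₂' (𝓝[<] 1) (𝓝 γ)) :
    ∀ x ∈ Ioo δ 1, U₁ x = U₂ x := by
  intro x₀ hx₀
  have hsub : Ico x₀ 1 ⊆ Ioo δ 1 := fun x hx => ⟨hx₀.1.trans_le hx.1, hx.2⟩
  have hsub' : Ico x₀ 1 ⊆ Ioo (-1) 1 := fun x hx => ⟨hδ₁.trans_lt (hsub hx).1, hx.2⟩
  have hnear : ∀ᶠ x in 𝓝[<] (1 : ℝ), x ∈ Ioo δ 1 := Ioo_mem_nhdsLT (hx₀.1.trans hx₀.2)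
  have hq₁ := tendsto_div_sub_of_tendsto_deriv (hnear.mono hU₁) hlim₁0 hlim₁γ
  have hq₂ := tendsto_div_sub_of_tendsto_deriv (hnear.mono hU₂) hlim₂0 hlim₂γ
  obtain ⟨m, hm⟩ : BddBelow (noSwirlCoeff U₁ U₂ '' Ico x₀ 1) :=
    bddBelow_image_Ico_of_tendsto
      (continuousOn_noSwirlCoeff (fun x hx => (hU₁ x (hsub hx)).continuousAt.continuousWithinAt)
        (fun x hx => (hU₂ x (hsub hx)).continuousAt.continuousWithinAt) hsub')
      (tendsto_noSwirlCoeff hq₁ hq₂)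
  have hg : (U₁ x₀ - U₂ x₀) / (1 - x₀) = 0 :=
    eq_zero_of_hasDerivAt_mul_of_tendsto_zero (g := fun x => (U₁ x - U₂ x) / (1 - x)) hx₀.2
      (fun x hx => hasDerivAt_sub_div_one_sub (hsub' hx) (hU₁ x (hsub hx)) (hU₂ x (hsub hx))
        (heq₁ x (hsub hx)) (heq₂ x (hsub hx)))
      (fun x hx => hm (mem_image_of_mem _ hx))
      (by simpa only [sub_div, sub_neg_eq_add, neg_add_cancel] using hq₁.sub hq₂)
  rw [div_eq_zero_iff, sub_eq_zero] at hg
  exact hg.resolve_right (sub_pos.2 hx₀.2).ne'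

/-- Uniqueness of C¹ solutions of the reduced no-swirl equation on (δ,1) with the
same boundary behavior at x = 1. -/
theorem stmt0 (μ γ δ : ℝ) (hδ₁ : -1 ≤ δ) (hδ₂ : δ < 1)
    (U₁ U₁' U₂ U₂' : ℝ → ℝ)
    (hU₁ : ∀ x ∈ Ioo δ 1, HasDerivAt U₁ (U₁' x) x)
    (hU₁' : ContinuousOn U₁' (Ioo δ 1))
    (hU₂ : ∀ x ∈ Ioo δ 1, HasDerivAt U₂ (U₂' x) x)
    (hU₂' : ContinuousOn U₂' (Ioo δ 1))
    (heq₁ : ∀ x ∈ Ioo δ 1,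
      (1 - x ^ 2) * U₁' x + 2 * x * U₁ x + (1 / 2) * (U₁ x) ^ 2 = μ * (1 - x) ^ 2)
    (heq₂ : ∀ x ∈ Ioo δ 1,
      (1 - x ^ 2) * U₂' x + 2 * x * U₂ x + (1 / 2) * (U₂ x) ^ 2 = μ * (1 - x) ^ 2)
    (hlim₁0 : Tendsto U₁ (𝓝[<] 1) (𝓝 0))
    (hlim₁γ : Tendsto U₁' (𝓝[<] 1) (𝓝 γ))
    (hlim₂0 : Tendsto U₂ (𝓝[<] 1) (𝓝 0))
    (hlim₂γ : Tendsto U₂' (𝓝[<] 1) (𝓝 γ)) :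
    ∀ x ∈ Ioo δ 1, U₁ x = U₂ x :=
  stmt0_general μ γ δ hδ₁ U₁ U₁' U₂ U₂' hU₁ hU₂ heq₁ heq₂ hlim₁0 hlim₁γ hlim₂0 hlim₂γ
end

section
/- Let μ > -1/2 and γ ∈ ℝ. Set b = √(1+2μ), and set δ* = -1 if γ ≥ -(1+b), while δ* = -1 + 2·((γ+1-b)/(γ+1+b))^{-1/b} if γ < -(1+b). Define U(x) = (1-x)·(1 - b - 2b(γ+1-b)/((γ+1+b)·((1+x)/2)^{-b} - (γ+1) + b)). Then U is infinitely differentiable on (δ*,1), U satisfies the reduced no-swirl equation with parameter μ on (δ*,1), lim_{x→1⁻} U'(x) = γ, and if δ* > -1 then |U(x)| → +∞ as x → δ*⁺. -/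
open Set Filter Topology

set_option maxHeartbeats 2000000 in
/-- Exact form of the axisymmetric no-swirl solutions when μ > -1/2. -/
theorem stmt1 (μ γ b δstar : ℝ) (hμ : -1 / 2 < μ)
    (hb : b = Real.sqrt (1 + 2 * μ))
    (hδstar : δstar = if γ ≥ -(1 + b) then -1
      else -1 + 2 * ((γ + 1 - b) / (γ + 1 + b)) ^ (-1 / b))
    (U : ℝ → ℝ)
    (hU : U = fun x => (1 - x) *
      (1 - b - 2 * b * (γ + 1 - b) / ((γ + 1 + b) * ((1 + x) / 2) ^ (-b) - (γ + 1) + b))) :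
    ContDiffOn ℝ (⊤ : ℕ∞) U (Ioo δstar 1) ∧
    (∀ x ∈ Ioo δstar 1,
      (1 - x ^ 2) * deriv U x + 2 * x * U x + (1 / 2) * (U x) ^ 2 = μ * (1 - x) ^ 2) ∧
    Tendsto (deriv U) (𝓝[<] 1) (𝓝 γ) ∧
    (δstar > -1 → Tendsto (fun x => |U x|) (𝓝[>] δstar) atTop) := by
  have h12 : (0:ℝ) < 1 + 2 * μ := by linarith
  have hb0 : 0 < b := by rw [hb]; exact Real.sqrt_pos.mpr h12
  have hb2 : b ^ 2 = 1 + 2 * μ := by rw [hb, Real.sq_sqrt h12.le]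
  have hμeq : μ = (b ^ 2 - 1) / 2 := by linarith
  set s : ℝ → ℝ := fun x => ((1 + x) / 2) ^ (-b) with hs_def
  set D : ℝ → ℝ := fun x => (γ + 1 + b) * s x - (γ + 1 - b) with hD_def
  have hU2 : U = fun x => (1 - x) * (1 - b - 2 * b * (γ + 1 - b) / D x) := by
    rw [hU]; funext x; simp only [hD_def, hs_def]; ring_nf
  set r : ℝ := (γ + 1 - b) / (γ + 1 + b) with hr_def
  set tstar : ℝ := r ^ (-1 / b) with htstar_def
  clear_value s D r tstar
  -- facts in the "else" case
  have helse : ¬ γ ≥ -(1 + b) →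
      γ + 1 + b < 0 ∧ 1 < r ∧ δstar = -1 + 2 * tstar ∧ 0 < tstar ∧ tstar < 1 ∧
        (γ + 1 - b) = (γ + 1 + b) * r := by
    intro hc
    have hA : γ + 1 + b < 0 := by
      rcases lt_or_ge (γ + 1 + b) 0 with h | h
      · exact h
      · exact absurd (by linarith : γ ≥ -(1 + b)) hc
    have hr1 : 1 < r := by
      rw [hr_def, lt_div_iff_of_neg hA]; linarith
    have hr0 : 0 < r := by linarith
    have ht0 : 0 < tstar := by rw [htstar_def]; exact Real.rpow_pos_of_pos hr0 _
    have ht1 : tstar < 1 := by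
      rw [htstar_def]
      exact Real.rpow_lt_one_of_one_lt_of_neg hr1 (by
        rw [neg_div]; exact neg_neg_of_pos (by positivity))
    refine ⟨hA, hr1, ?_, ht0, ht1, ?_⟩
    · rw [hδstar, if_neg hc]
    · rw [hr_def, mul_comm, div_mul_cancel₀ _ hA.ne]
  have hδm1 : -1 ≤ δstar := by
    by_cases hc : γ ≥ -(1 + b)
    · rw [hδstar, if_pos hc]
    · obtain ⟨_, _, hδeq, ht0, _, _⟩ := helse hc
      rw [hδeq]; linarith
  have hδ1 : δstar < 1 := by
    by_cases hc : γ ≥ -(1 + b)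
    · rw [hδstar, if_pos hc]; norm_num
    · obtain ⟨_, _, hδeq, _, ht1, _⟩ := helse hc
      rw [hδeq]; linarith
  -- basic point facts
  have ht : ∀ x ∈ Ioo δstar 1, 0 < (1 + x) / 2 ∧ (1 + x) / 2 < 1 := by
    intro x hx
    constructor
    · have := hx.1; linarith [hδm1]
    · have := hx.2; linarith
  have hs1 : ∀ x ∈ Ioo δstar 1, 1 < s x := by
    intro x hx
    rw [hs_def]
    exact (Real.one_lt_rpow_iff_of_pos (ht x hx).1).mpr
      (Or.inr ⟨(ht x hx).2, neg_neg_of_pos hb0⟩)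
  -- tstar^(-b) = r in the else case
  have htsr : ¬ γ ≥ -(1 + b) → tstar ^ (-b) = r := by
    intro hc
    obtain ⟨hA, hr1, _, _, _, _⟩ := helse hc
    have hr0 : (0:ℝ) < r := by linarith
    rw [htstar_def, ← Real.rpow_mul hr0.le]
    rw [show -1 / b * -b = 1 by field_simp, Real.rpow_one]
  -- positivity of the denominator
  have hDpos : ∀ x ∈ Ioo δstar 1, 0 < D x := by
    intro x hx
    by_cases hc : γ ≥ -(1 + b)
    · have hA : 0 ≤ γ + 1 + b := by linarith
      have h1 := mul_nonneg hA (by linarith [hs1 x hx] : (0:ℝ) ≤ s x - 1)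
      rw [hD_def]; simp only; nlinarith
    · obtain ⟨hA, hr1, hδeq, ht0, ht1, hBr⟩ := helse hc
      have htx : tstar < (1 + x) / 2 := by
        have := hx.1; rw [hδeq] at this; linarith
      have hsx : s x < r := by
        rw [← htsr hc, hs_def]
        simp only
        rw [Real.rpow_neg (by linarith [(ht x hx).1] : (0:ℝ) ≤ (1+x)/2),
            Real.rpow_neg ht0.le]
        have h1 : tstar ^ b < ((1 + x) / 2) ^ b :=
          Real.rpow_lt_rpow ht0.le htx hb0
        exact inv_strictAnti₀ (Real.rpow_pos_of_pos ht0 b) h1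
      have hprod := mul_pos_of_neg_of_neg hA (show s x - r < 0 by linarith)
      rw [hD_def]; simp only; nlinarith
  -- the derivative of U
  set E : ℝ → ℝ := fun x => (-1) * (1 - b - 2 * b * (γ + 1 - b) / D x) +
      (1 - x) * (-((0 * D x - 2 * b * (γ + 1 - b) *
        ((γ + 1 + b) * (-b * s x / (1 + x)))) / (D x) ^ 2)) with hE_def
  clear_value E
  have hsder : ∀ x ∈ Ioo δstar 1, HasDerivAt s (-b * s x / (1 + x)) x := by
    intro x hx
    have ht0 := (ht x hx).1
    have h1x : (1:ℝ) + x ≠ 0 := ne_of_gt (by linarith)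
    have h1 : HasDerivAt (fun y : ℝ => (1 + y) / 2) (1 / 2) x := by
      simpa using ((hasDerivAt_id x).const_add 1).div_const 2
    have h2 := (Real.hasDerivAt_rpow_const (x := (1 + x) / 2) (p := -b)
      (Or.inl (ne_of_gt ht0))).comp x h1
    rw [hs_def]
    refine h2.congr_deriv ?_
    rw [show (-b - 1 : ℝ) = -b + (-1) by ring, Real.rpow_add ht0, Real.rpow_neg_one]
    simp only
    field_simp
  have hUder : ∀ x ∈ Ioo δstar 1, HasDerivAt U (E x) x := by
    intro x hx
    have hDne := (hDpos x hx).ne'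
    have hDder : HasDerivAt D ((γ + 1 + b) * (-b * s x / (1 + x))) x := by
      rw [hD_def]
      exact ((hsder x hx).const_mul _).sub_const _
    have hq := (hasDerivAt_const x (2 * b * (γ + 1 - b))).div hDder hDne
    have hG := hq.const_sub (1 - b)
    have hlin : HasDerivAt (fun y : ℝ => 1 - y) (-1) x := by
      simpa using (hasDerivAt_id x).const_sub 1
    rw [hU2, hE_def]
    exact hlin.mul hG
  refine ⟨?_, ?_, ?_, ?_⟩
  -- smoothness
  · intro x hx
    have ht0 := (ht x hx).1
    have hDne := (hDpos x hx).ne'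
    apply ContDiffAt.contDiffWithinAt
    rw [hU2]
    have hin : ContDiffAt ℝ (⊤ : ℕ∞) (fun y : ℝ => (1 + y) / 2) x :=
      (contDiffAt_const.add contDiffAt_id).div_const 2
    have hsC : ContDiffAt ℝ (⊤ : ℕ∞) s x := by
      rw [hs_def]
      exact (Real.contDiffAt_rpow_const_of_ne (ne_of_gt ht0)).comp x hin
    have hDC : ContDiffAt ℝ (⊤ : ℕ∞) D x := by
      rw [hD_def]
      exact (contDiffAt_const.mul hsC).sub contDiffAt_const
    exact (contDiffAt_const.sub contDiffAt_id).mul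
      ((contDiffAt_const.sub (contDiffAt_const.div hDC hDne)))
  -- the ODE
  · intro x hx
    have hDne := (hDpos x hx).ne'
    have h1x : (1 + x) ≠ 0 := ne_of_gt (by have := hx.1; linarith)
    rw [(hUder x hx).deriv, hU2, hE_def, hμeq]
    simp only [hD_def, hs_def] at hDne ⊢
    field_simp
    ring
  -- limit of the derivative at 1
  · have hin1 : ContinuousAt (fun x : ℝ => (1 + x) / 2) 1 := by fun_prop
    have hsc : ContinuousAt s 1 := by
      rw [hs_def]
      exact hin1.rpow_const (Or.inl (by norm_num))
    have hs1v : s 1 = 1 := by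
      rw [hs_def]; norm_num
    have hD1 : D 1 = 2 * b := by
      rw [hD_def]; simp only [hs1v]; ring
    have hD1ne : D 1 ≠ 0 := by rw [hD1]; positivity
    have hDc : ContinuousAt D 1 := by
      rw [hD_def]
      exact (continuousAt_const.mul hsc).sub continuousAt_const
    have hEc : ContinuousAt E 1 := by
      rw [hE_def]
      apply ContinuousAt.add
      · exact continuousAt_const.mul
          (continuousAt_const.sub (continuousAt_const.div hDc hD1ne))
      · apply ContinuousAt.mul (by fun_prop)
        apply ContinuousAt.neg
        apply ContinuousAt.div
        · apply ContinuousAt.sub (continuousAt_const.mul hDc)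
          apply ContinuousAt.mul continuousAt_const
          apply ContinuousAt.mul continuousAt_const
          exact (continuousAt_const.mul hsc).div (by fun_prop) (by norm_num)
        · exact hDc.pow 2
        · rw [hD1]; positivity
    have hE1 : E 1 = γ := by
      have h2b : (2 : ℝ) * b ≠ 0 := by positivity
      simp only [hE_def, hD1, hs1v]
      field_simp
      ring
    have hev : ∀ᶠ x in 𝓝[<] (1:ℝ), E x = deriv U x := by
      filter_upwards [Ioo_mem_nhdsLT hδ1] with x hx
      exact ((hUder x hx).deriv).symm
    have hTE : Tendsto E (𝓝[<] (1:ℝ)) (𝓝 γ) := by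
      rw [← hE1]
      exact hEc.tendsto.mono_left nhdsWithin_le_nhds
    exact hTE.congr' hev
  -- blow-up at δstar
  · intro hδgt
    have hc : ¬ γ ≥ -(1 + b) := by
      intro h
      rw [hδstar, if_pos h] at hδgt
      exact lt_irrefl _ hδgt
    obtain ⟨hA, hr1, hδeq, ht0, ht1, hBr⟩ := helse hc
    have hB : γ + 1 - b < 0 := by linarith
    have htsδ : (1 + δstar) / 2 = tstar := by rw [hδeq]; ring
    have hsδ : s δstar = r := by
      rw [hs_def]; simp only; rw [htsδ]; exact htsr hc
    have hDδ : D δstar = 0 := by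
      rw [hD_def]; simp only [hsδ]; rw [hBr]; ring
    have hsc : ContinuousAt s δstar := by
      rw [hs_def]
      refine ContinuousAt.rpow_const (by fun_prop) (Or.inl ?_)
      rw [htsδ]; exact ht0.ne'
    have hDc : ContinuousAt D δstar := by
      rw [hD_def]
      exact (continuousAt_const.mul hsc).sub continuousAt_const
    have hDt : Tendsto D (𝓝[>] δstar) (𝓝[>] 0) := by
      rw [tendsto_nhdsWithin_iff]
      constructor
      · rw [← hDδ]
        exact hDc.tendsto.mono_left nhdsWithin_le_nhds
      · filter_upwards [Ioo_mem_nhdsGT hδ1] with x hx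
        exact hDpos x hx
    have hinv : Tendsto (fun x => (D x)⁻¹) (𝓝[>] δstar) atTop := hDt.inv_tendsto_nhdsGT_zero
    have hC : (0:ℝ) < -(2 * b * (γ + 1 - b)) * (1 - δstar) := by
      nlinarith [mul_pos (mul_pos (mul_pos two_pos hb0) (neg_pos.mpr hB))
        (show (0:ℝ) < 1 - δstar by linarith)]
    have hnum : Tendsto (fun x => -(2 * b * (γ + 1 - b)) * (1 - x)) (𝓝[>] δstar)
        (𝓝 (-(2 * b * (γ + 1 - b)) * (1 - δstar))) :=
      ((continuous_const.mul (continuous_const.sub continuous_id)).tendsto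
        δstar).mono_left nhdsWithin_le_nhds
    have hmul : Tendsto (fun x => -(2 * b * (γ + 1 - b)) * (1 - x) * (D x)⁻¹)
        (𝓝[>] δstar) atTop := hnum.pos_mul_atTop hC hinv  -- check arg order
    have hconst : Tendsto (fun x => (1 - x) * (1 - b)) (𝓝[>] δstar)
        (𝓝 ((1 - δstar) * (1 - b))) :=
      (((continuous_const.sub continuous_id).mul continuous_const).tendsto
        δstar).mono_left nhdsWithin_le_nhds
    have hUt : Tendsto U (𝓝[>] δstar) atTop := by
      rw [hU2]
      refine (hconst.add_atTop hmul).congr (fun x => ?_)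
      ring
    exact tendsto_abs_atTop_atTop.comp hUt
end

section
/- Let μ = -1/2 and γ ∈ ℝ. Set δ* = -1 if γ ≥ -1, while δ* = -1 + 2·e^{2/(γ+1)} if γ < -1. Define U(x) = (1-x)·(1 + 2(γ+1)/((γ+1)·ln((1+x)/2) - 2)). Then U is infinitely differentiable on (δ*,1), U satisfies the reduced no-swirl equation with parameter μ = -1/2 on (δ*,1), lim_{x→1⁻} U'(x) = γ, and if δ* > -1 then |U(x)| → +∞ as x → δ*⁺. -/
open Set Filter Topology

/-- Exact form of the axisymmetric no-swirl solutions when μ = -1/2. -/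
theorem stmt2 (γ δstar : ℝ)
    (hδstar : δstar = if γ ≥ -1 then -1 else -1 + 2 * Real.exp (2 / (γ + 1)))
    (U : ℝ → ℝ)
    (hU : U = fun x => (1 - x) *
      (1 + 2 * (γ + 1) / ((γ + 1) * Real.log ((1 + x) / 2) - 2))) :
    ContDiffOn ℝ (⊤ : ℕ∞) U (Ioo δstar 1) ∧
    (∀ x ∈ Ioo δstar 1,
      (1 - x ^ 2) * deriv U x + 2 * x * U x + (1 / 2) * (U x) ^ 2
        = (-1 / 2) * (1 - x) ^ 2) ∧
    Tendsto (deriv U) (𝓝[<] 1) (𝓝 γ) ∧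
    (δstar > -1 → Tendsto (fun x => |U x|) (𝓝[>] δstar) atTop) := by
  subst hU
  have hδlt1 : δstar < 1 := by
    rw [hδstar]; split
    · norm_num
    · rename_i h
      push_neg at h
      have hneg : 2 / (γ + 1) < 0 := div_neg_of_pos_of_neg two_pos (by linarith)
      have : Real.exp (2 / (γ + 1)) < 1 := Real.exp_lt_one_iff.mpr hneg
      linarith
  have hδge : -1 ≤ δstar := by
    rw [hδstar]; split
    · exact le_rfl
    · have := Real.exp_pos (2 / (γ + 1)); linarith
  have key : ∀ x ∈ Ioo δstar 1, (γ + 1) * Real.log ((1 + x) / 2) - 2 < 0 := by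
    intro x hx
    have hx1 : -1 < x := lt_of_le_of_lt hδge hx.1
    have hx2 : x < 1 := hx.2
    by_cases h : γ ≥ -1
    · have hlog : Real.log ((1 + x) / 2) ≤ 0 :=
        Real.log_nonpos (by linarith) (by linarith)
      nlinarith
    · push_neg at h
      rw [hδstar, if_neg (not_le.mpr h)] at hx
      have hc : 2 / (γ + 1) < Real.log ((1 + x) / 2) := by
        rw [Real.lt_log_iff_exp_lt (by linarith)]
        have := hx.1; linarith
      have hγ1 : γ + 1 < 0 := by linarith
      have := mul_lt_mul_of_neg_left hc hγ1
      rw [mul_div_cancel₀ 2 (ne_of_lt hγ1)] at this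
      linarith
  have hder : ∀ x ∈ Ioo δstar 1,
      HasDerivAt (fun x => (1 - x) * (1 + 2 * (γ + 1) / ((γ + 1) * Real.log ((1 + x) / 2) - 2)))
        ((0 - 1) * (1 + 2 * (γ + 1) / ((γ + 1) * Real.log ((1 + x) / 2) - 2)) +
          (1 - x) * ((0 * ((γ + 1) * Real.log ((1 + x) / 2) - 2) -
            2 * (γ + 1) * ((γ + 1) * (1 / (1 + x)) - 0)) /
            ((γ + 1) * Real.log ((1 + x) / 2) - 2) ^ 2)) x := by
    intro x hx
    have hx1 : -1 < x := lt_of_le_of_lt hδge hx.1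
    have h1x : (0:ℝ) < 1 + x := by linarith
    have hDne : (γ + 1) * Real.log ((1 + x) / 2) - 2 ≠ 0 := ne_of_lt (key x hx)
    have hL : HasDerivAt (fun x => Real.log ((1 + x) / 2)) (1 / (1 + x)) x := by
      have h2 : HasDerivAt (fun x : ℝ => (1 + x) / 2) (1 / 2) x := by
        simpa using ((hasDerivAt_id x).const_add 1).div_const 2
      have := (Real.hasDerivAt_log (by positivity : (1 + x) / 2 ≠ 0)).comp x h2
      refine this.congr_deriv ?_
      field_simp
    have hD : HasDerivAt (fun x => (γ + 1) * Real.log ((1 + x) / 2) - 2)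
        ((γ + 1) * (1 / (1 + x)) - 0) x := by
      simpa using (hL.const_mul (γ + 1)).sub_const 2
    have h2 : HasDerivAt (fun x => 2 * (γ + 1) / ((γ + 1) * Real.log ((1 + x) / 2) - 2))
        ((0 * ((γ + 1) * Real.log ((1 + x) / 2) - 2) -
          2 * (γ + 1) * ((γ + 1) * (1 / (1 + x)) - 0)) /
          ((γ + 1) * Real.log ((1 + x) / 2) - 2) ^ 2) x :=
      (hasDerivAt_const x (2 * (γ + 1))).div hD hDne
    exact ((hasDerivAt_const x (1:ℝ)).sub (hasDerivAt_id x)).mul (h2.const_add 1)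
  refine ⟨?_, ?_, ?_, ?_⟩
  · intro x hx
    have hx1 : -1 < x := lt_of_le_of_lt hδge hx.1
    have hDne : (γ + 1) * Real.log ((1 + x) / 2) - 2 ≠ 0 := ne_of_lt (key x hx)
    have hlog : ContDiffAt ℝ (⊤ : ℕ∞) (fun x => Real.log ((1 + x) / 2)) x := by
      have h0 : (1 + x) / 2 ≠ 0 := by
        have : (0:ℝ) < (1 + x) / 2 := by linarith
        exact ne_of_gt this
      exact (Real.contDiffAt_log.mpr h0).comp x
        ((contDiffAt_const.add contDiffAt_id).div_const 2)
    have hDat : ContDiffAt ℝ (⊤ : ℕ∞) (fun x => (γ + 1) * Real.log ((1 + x) / 2) - 2) x :=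
      (contDiffAt_const.mul hlog).sub contDiffAt_const
    have : ContDiffAt ℝ (⊤ : ℕ∞)
        (fun x => (1 - x) * (1 + 2 * (γ + 1) / ((γ + 1) * Real.log ((1 + x) / 2) - 2))) x :=
      (contDiffAt_const.sub contDiffAt_id).mul
        (contDiffAt_const.add (contDiffAt_const.div hDat hDne))
    exact this.contDiffWithinAt
  · intro x hx
    have hx1 : -1 < x := lt_of_le_of_lt hδge hx.1
    have h1x : (0:ℝ) < 1 + x := by linarith
    have hDne : (γ + 1) * Real.log ((1 + x) / 2) - 2 ≠ 0 := ne_of_lt (key x hx)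
    rw [(hder x hx).deriv]
    field_simp
    ring
  · have hmem : Ioo δstar 1 ∈ 𝓝[<] (1:ℝ) := Ioo_mem_nhdsLT_of_mem ⟨hδlt1, le_refl 1⟩
    set F : ℝ → ℝ := fun x =>
      (0 - 1) * (1 + 2 * (γ + 1) / ((γ + 1) * Real.log ((1 + x) / 2) - 2)) +
        (1 - x) * ((0 * ((γ + 1) * Real.log ((1 + x) / 2) - 2) -
          2 * (γ + 1) * ((γ + 1) * (1 / (1 + x)) - 0)) /
          ((γ + 1) * Real.log ((1 + x) / 2) - 2) ^ 2) with hF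
    have heq : (deriv fun x => (1 - x) *
        (1 + 2 * (γ + 1) / ((γ + 1) * Real.log ((1 + x) / 2) - 2))) =ᶠ[𝓝[<] (1:ℝ)] F := by
      filter_upwards [hmem] with x hx
      exact (hder x hx).deriv
    refine Tendsto.congr' heq.symm ?_
    have hlog : ContinuousAt (fun x : ℝ => Real.log ((1 + x) / 2)) 1 :=
      (Real.continuousAt_log (by norm_num)).comp
        ((continuous_const.add continuous_id).div_const 2).continuousAt
    have hD1 : ContinuousAt (fun x : ℝ => (γ + 1) * Real.log ((1 + x) / 2) - 2) 1 :=
      (continuousAt_const.mul hlog).sub continuousAt_const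
    have hDne1 : (γ + 1) * Real.log ((1 + 1) / 2) - 2 ≠ 0 := by
      norm_num
    have hcont : ContinuousAt F 1 := by
      apply ContinuousAt.add
      · exact continuousAt_const.mul (continuousAt_const.add
          (continuousAt_const.div hD1 hDne1))
      · have hinv : ContinuousAt (fun x : ℝ => 1 / (1 + x)) 1 :=
          continuousAt_const.div (continuousAt_const.add continuousAt_id) (by norm_num)
        have hnum : ContinuousAt (fun x : ℝ =>
            0 * ((γ + 1) * Real.log ((1 + x) / 2) - 2) -
              2 * (γ + 1) * ((γ + 1) * (1 / (1 + x)) - 0)) 1 :=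
          (continuousAt_const.mul hD1).sub (continuousAt_const.mul
            ((continuousAt_const.mul hinv).sub continuousAt_const))
        exact (continuousAt_const.sub continuousAt_id).mul
          (hnum.div (hD1.pow 2) (pow_ne_zero 2 hDne1))
    have hF1 : F 1 = γ := by
      rw [hF]
      norm_num
      ring
    have h2 : Tendsto F (𝓝[<] (1:ℝ)) (𝓝 (F 1)) :=
      hcont.tendsto.mono_left nhdsWithin_le_nhds
    rwa [hF1] at h2
  · intro hδ
    have hγ : ¬ γ ≥ -1 := by
      intro h
      rw [hδstar, if_pos h] at hδ
      exact lt_irrefl _ hδ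
    push_neg at hγ
    have hγ1 : γ + 1 < 0 := by linarith
    have hδeq : δstar = -1 + 2 * Real.exp (2 / (γ + 1)) := by
      rw [hδstar, if_neg (not_le.mpr hγ)]
    have hD0 : (γ + 1) * Real.log ((1 + δstar) / 2) - 2 = 0 := by
      rw [hδeq]
      have : (1 + (-1 + 2 * Real.exp (2 / (γ + 1)))) / 2 = Real.exp (2 / (γ + 1)) := by
        ring
      rw [this, Real.log_exp, mul_div_cancel₀ 2 (ne_of_lt hγ1)]
      ring
    -- continuity of pieces at δstar
    have h1δ : (0:ℝ) < 1 + δstar := by linarith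
    have hlogδ : ContinuousAt (fun x : ℝ => Real.log ((1 + x) / 2)) δstar :=
      (Real.continuousAt_log (by positivity)).comp
        ((continuous_const.add continuous_id).div_const 2).continuousAt
    have hDcont : ContinuousAt (fun x : ℝ => (γ + 1) * Real.log ((1 + x) / 2) - 2) δstar :=
      (continuousAt_const.mul hlogδ).sub continuousAt_const
    have hmem : Ioo δstar 1 ∈ 𝓝[>] δstar := Ioo_mem_nhdsGT_of_mem ⟨le_refl _, hδlt1⟩
    -- numerator tendsto
    have hnum : Tendsto (fun x => |(1 - x) *
        (((γ + 1) * Real.log ((1 + x) / 2) - 2) + 2 * (γ + 1))|) (𝓝[>] δstar)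
        (𝓝 (|(1 - δstar) * (((γ + 1) * Real.log ((1 + δstar) / 2) - 2) + 2 * (γ + 1))|)) := by
      refine (ContinuousAt.tendsto ?_).mono_left nhdsWithin_le_nhds
      exact ((continuousAt_const.sub continuousAt_id).mul
        (hDcont.add continuousAt_const)).abs
    have hnumpos : 0 < |(1 - δstar) * (((γ + 1) * Real.log ((1 + δstar) / 2) - 2) + 2 * (γ + 1))| := by
      rw [hD0]
      have h1 : (1 - δstar) * (0 + 2 * (γ + 1)) ≠ 0 := by
        apply mul_ne_zero (by linarith)
        simp only [zero_add]
        intro h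
        nlinarith
      exact abs_pos.mpr h1
    -- |D|⁻¹ tendsto atTop
    have hDabs : Tendsto (fun x => |(γ + 1) * Real.log ((1 + x) / 2) - 2|) (𝓝[>] δstar) (𝓝[>] 0) := by
      refine tendsto_nhdsWithin_of_tendsto_nhds_of_eventually_within _ ?_ ?_
      · have : Tendsto (fun x => |(γ + 1) * Real.log ((1 + x) / 2) - 2|) (𝓝 δstar)
            (𝓝 |(γ + 1) * Real.log ((1 + δstar) / 2) - 2|) := hDcont.abs.tendsto
        rw [hD0] at this
        simpa using this.mono_left nhdsWithin_le_nhds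
      · filter_upwards [hmem] with x hx
        exact abs_pos.mpr (ne_of_lt (key x hx))
    have hinv : Tendsto (fun x => |(γ + 1) * Real.log ((1 + x) / 2) - 2|⁻¹) (𝓝[>] δstar) atTop :=
      tendsto_inv_nhdsGT_zero.comp hDabs
    have hprod := hnum.pos_mul_atTop hnumpos hinv
    refine hprod.congr' ?_
    filter_upwards [hmem] with x hx
    have hDne : (γ + 1) * Real.log ((1 + x) / 2) - 2 ≠ 0 := ne_of_lt (key x hx)
    have : (1 - x) * (1 + 2 * (γ + 1) / ((γ + 1) * Real.log ((1 + x) / 2) - 2)) =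
        ((1 - x) * (((γ + 1) * Real.log ((1 + x) / 2) - 2) + 2 * (γ + 1))) /
          ((γ + 1) * Real.log ((1 + x) / 2) - 2) := by
      field_simp
    rw [this, abs_div, abs_mul]
    ring
end

section
/- Let μ > -1/2, set b = √(1+2μ), and let γ > -(1+b). Then for every x ∈ (-1,1) the quantity (γ+1+b)·((1+x)/2)^{-b} - (γ+1) + b is nonzero, the function U(x) = (1-x)·(1 - b - 2b(γ+1-b)/((γ+1+b)·((1+x)/2)^{-b} - (γ+1) + b)) satisfies the reduced no-swirl equation with parameter μ on all of (-1,1), and lim_{x→-1⁺} U(x) = 2(1-b). -/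
/-!
Writing `U = (1 - x) V`, the reduced no-swirl equation becomes the Riccati equation
`(1 + x) V' = μ + V - V² / 2`, which in the variable `log ((1 + x) / 2)` has constant
coefficients and roots `1 ± b`. Its solutions are Möbius functions of `t = ((1 + x) / 2) ^ (-b)`,
and `V = 1 - b - 2b(γ + 1 - b) / D` with `D = (γ + 1 + b) t - (γ + 1) + b` is one of them.
For `x ∈ (-1, 1)` we have `t > 1`, so `D = (γ + 1 + b)(t - 1) + 2b > 0` once `γ + 1 + b > 0`;
as `x → -1⁺`, `t → ∞`, so `D → ∞` and `U → 2 (1 - b)`.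
-/

open Set Filter Topology

theorem noSwirl_of_riccati {μ x : ℝ} {V : ℝ → ℝ} (hx : x ≠ -1)
    (hV : HasDerivAt V ((μ + V x - V x ^ 2 / 2) / (1 + x)) x) :
    (1 - x ^ 2) * deriv (fun y => (1 - y) * V y) x + 2 * x * ((1 - x) * V x)
      + (1 / 2) * ((1 - x) * V x) ^ 2 = μ * (1 - x) ^ 2 := by
  have hx' : 1 + x ≠ 0 := fun h => hx (by linarith)
  have hU : HasDerivAt (fun y => (1 - y) * V y) _ x := ((hasDerivAt_id' x).const_sub 1).mul hV
  rw [hU.deriv]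
  field_simp
  ring

namespace NoSwirl

noncomputable def denom (b γ x : ℝ) : ℝ := (γ + 1 + b) * ((1 + x) / 2) ^ (-b) - (γ + 1) + b

noncomputable def profile (b γ x : ℝ) : ℝ := 1 - b - 2 * b * (γ + 1 - b) / denom b γ x

variable {b γ x : ℝ}

theorem hasDerivAt_denom (hx : -1 < x) :
    HasDerivAt (denom b γ) (-b * (denom b γ x + (γ + 1 - b)) / (1 + x)) x := by
  have hs : 0 < (1 + x) / 2 := by linarith
  have hlin : HasDerivAt (fun y : ℝ => (1 + y) / 2) (1 / 2) x := by
    simpa using ((hasDerivAt_id x).const_add 1).div_const 2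
  have hpow := (Real.hasDerivAt_rpow_const (p := -b) (Or.inl hs.ne')).comp x hlin
  refine (((hpow.const_mul (γ + 1 + b)).sub_const (γ + 1)).add_const b).congr_deriv ?_
  rw [Real.rpow_sub hs, Real.rpow_one, denom]
  field_simp
  ring

theorem hasDerivAt_profile (hx : -1 < x) (hD : denom b γ x ≠ 0) :
    HasDerivAt (profile b γ)
      (((b ^ 2 - 1) / 2 + profile b γ x - profile b γ x ^ 2 / 2) / (1 + x)) x := by
  have hx' : 1 + x ≠ 0 := by linarith
  refine (((hasDerivAt_const x (2 * b * (γ + 1 - b))).div (hasDerivAt_denom hx) hD).const_sub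
    (1 - b)).congr_deriv ?_
  unfold profile
  field_simp
  ring

theorem denom_pos (hb : 0 < b) (hγ : -(1 + b) < γ) (hx : x ∈ Ioo (-1 : ℝ) 1) :
    0 < denom b γ x := by
  have ht : 1 < ((1 + x) / 2) ^ (-b) :=
    Real.one_lt_rpow_of_pos_of_lt_one_of_neg (by linarith [hx.1]) (by linarith [hx.2])
      (neg_lt_zero.mpr hb)
  have hD : denom b γ x = (γ + 1 + b) * (((1 + x) / 2) ^ (-b) - 1) + 2 * b := by
    rw [denom]; ring
  rw [hD]
  exact add_pos (mul_pos (by linarith) (sub_pos.mpr ht)) (by linarith)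

theorem tendsto_denom_atTop (hb : 0 < b) (hγ : -(1 + b) < γ) :
    Tendsto (denom b γ) (𝓝[>] (-1)) atTop := by
  have hs : Tendsto (fun x : ℝ => (1 + x) / 2) (𝓝[>] (-1)) (𝓝[>] 0) := by
    have hc : ContinuousWithinAt (fun x : ℝ => (1 + x) / 2) (Ioi (-1)) (-1) := by fun_prop
    have h := hc.tendsto_nhdsWithin fun y (hy : -1 < y) => show 0 < (1 + y) / 2 by linarith
    rwa [show ((1 : ℝ) + -1) / 2 = 0 by norm_num] at h
  have ht := (tendsto_rpow_neg_nhdsGT_zero (neg_lt_zero.mpr hb)).comp hs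
  exact tendsto_atTop_add_const_right _ b <| tendsto_atTop_add_const_right _ (-(γ + 1)) <|
    ht.const_mul_atTop (by linarith)

theorem tendsto_profile (hb : 0 < b) (hγ : -(1 + b) < γ) :
    Tendsto (profile b γ) (𝓝[>] (-1)) (𝓝 (1 - b)) := by
  have h := (tendsto_const_nhds (x := 1 - b)).sub
    (tendsto_const_nhds.div_atTop (tendsto_denom_atTop hb hγ) : Tendsto
      (fun x => 2 * b * (γ + 1 - b) / denom b γ x) _ (𝓝 0))
  rwa [sub_zero] at h

end NoSwirl

open NoSwirl

/-- For μ > -1/2 and γ > -(1+b), the explicit solution is globally defined on (-1,1),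
solves the reduced no-swirl equation there, and has limit 2(1-b) at x = -1⁺. -/
theorem stmt4 (μ b γ : ℝ) (hμ : -1 / 2 < μ)
    (hb : b = Real.sqrt (1 + 2 * μ)) (hγ : γ > -(1 + b))
    (U : ℝ → ℝ)
    (hU : U = fun x => (1 - x) *
      (1 - b - 2 * b * (γ + 1 - b) / ((γ + 1 + b) * ((1 + x) / 2) ^ (-b) - (γ + 1) + b))) :
    (∀ x ∈ Ioo (-1 : ℝ) 1, (γ + 1 + b) * ((1 + x) / 2) ^ (-b) - (γ + 1) + b ≠ 0) ∧
    (∀ x ∈ Ioo (-1 : ℝ) 1,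
      (1 - x ^ 2) * deriv U x + 2 * x * U x + (1 / 2) * (U x) ^ 2 = μ * (1 - x) ^ 2) ∧
    Tendsto U (𝓝[>] (-1)) (𝓝 (2 * (1 - b))) := by
  have hb0 : 0 < b := hb ▸ Real.sqrt_pos.mpr (by linarith)
  have hμb : μ = (b ^ 2 - 1) / 2 := by
    rw [hb, Real.sq_sqrt (by linarith)]; ring
  have hU' : U = fun x => (1 - x) * profile b γ x := hU
  refine ⟨fun x hx => (denom_pos hb0 hγ hx).ne', fun x hx => ?_, ?_⟩
  · rw [hU', hμb]
    exact noSwirl_of_riccati hx.1.ne' (hasDerivAt_profile hx.1 (denom_pos hb0 hγ hx).ne')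
  · have hlin : Tendsto (fun x : ℝ => 1 - x) (𝓝[>] (-1)) (𝓝 2) := by
      exact ((continuous_const.sub continuous_id).tendsto' (-1 : ℝ) 2 (by norm_num)).mono_left
        nhdsWithin_le_nhds
    rw [hU']
    exact hlin.mul (tendsto_profile hb0 hγ)
end

section
/- Let δ > 0 and let H be continuous on [-1,-1+δ]. Suppose U ∈ C¹((-1,-1+δ]) satisfies (1-x²)·U'(x) + 2x·U(x) + (1/2)·U(x)² = H(x) for all x ∈ (-1,-1+δ). Then H(-1) ≥ -2, the limit lim_{x→-1⁺} U(x) exists, and this limit equals either 2 - √(4+2H(-1)) or 2 + √(4+2H(-1)). -/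
/-!
Write the equation as `(1 + x) U' = R(x, U)` with `R(x, u) = (H x - 2 x u - u² / 2) / (1 - x)`,
so that `R(-1, u) = (H(-1) + 2 u - u² / 2) / 2`, whose roots are `2 ± √(4 + 2 H(-1))`.

For large `|U|` one has `(1 + x) U' ≤ -U² / 8`, so `1 / U - log (1 + x) / 8` increases; since
`log (1 + x) → -∞`, `|U|` cannot stay large near `-1`, and as large levels are only crossed
downwards, `U` is bounded there. A level `c` with `R(-1, c) ≠ 0` is crossed in one direction
only near `-1`, hence `liminf U = limsup U`. Finally, if `U → L` then `(1 + x) U' → R(-1, L)`,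
and a nonzero value would make `U` diverge like a multiple of `log (1 + x)`.
-/

open Set Filter Topology

theorem le_left_of_le_right_of_deriv_neg_at_level {f f' : ℝ → ℝ} {a b c : ℝ} (hab : a ≤ b)
    (hf : ∀ x ∈ Icc a b, HasDerivAt f (f' x) x) (hcross : ∀ x ∈ Icc a b, f x = c → f' x < 0)
    (hb : c ≤ f b) : c ≤ f a := by
  have hg : ∀ y ∈ Icc (-b) (-a), HasDerivAt (fun y => f (-y)) (-f' (-y)) y := fun y hy => by
    simpa [Function.comp_def] using
      (hf (-y) ⟨by linarith [hy.2], by linarith [hy.1]⟩).scomp y (hasDerivAt_neg y)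
  have key := image_le_of_deriv_right_lt_deriv_boundary' (f := fun _ => c) (f' := fun _ => 0)
    continuousOn_const (fun _ _ => hasDerivWithinAt_const _ _ _) (by simpa using hb)
    (fun y hy => (hg y hy).continuousAt.continuousWithinAt)
    (fun y hy => (hg y (Ico_subset_Icc_self hy)).hasDerivWithinAt)
    (fun y hy hy' => neg_pos.2 <| hcross (-y) ⟨by linarith [hy.2], by linarith [hy.1]⟩ hy'.symm)
    (right_mem_Icc.2 (neg_le_neg hab))
  simpa using key

theorem eventually_le_of_frequently_le {f f' : ℝ → ℝ} {a c : ℝ}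
    (hf : ∀ᶠ x in 𝓝[>] a, HasDerivAt f (f' x) x)
    (hcross : ∀ᶠ x in 𝓝[>] a, f x = c → f' x < 0)
    (hfreq : ∃ᶠ x in 𝓝[>] a, c ≤ f x) : ∀ᶠ x in 𝓝[>] a, c ≤ f x := by
  obtain ⟨e, hae, he⟩ := mem_nhdsGT_iff_exists_Ioo_subset.1 (hf.and hcross)
  obtain ⟨z, hz, haz, hze⟩ := (hfreq.and_eventually (Ioo_mem_nhdsGT hae)).exists
  filter_upwards [Ioo_mem_nhdsGT haz] with x hx
  have hsub : Icc x z ⊆ Ioo a e := Icc_subset_Ioo hx.1 hze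
  exact le_left_of_le_right_of_deriv_neg_at_level hx.2.le (fun y hy => (he (hsub hy)).1)
    (fun y hy => (he (hsub hy)).2) hz

theorem tendsto_atBot_of_le_mul_deriv {f f' : ℝ → ℝ} {a κ : ℝ} (hκ : 0 < κ)
    (hf : ∀ᶠ x in 𝓝[>] a, HasDerivAt f (f' x) x)
    (hbound : ∀ᶠ x in 𝓝[>] a, κ ≤ (x - a) * f' x) :
    Tendsto f (𝓝[>] a) atBot := by
  obtain ⟨e, hae : a < e, he⟩ := mem_nhdsGT_iff_exists_Ioo_subset.1 (hf.and hbound)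
  have hlog : ∀ x ∈ Ioo a e,
      HasDerivAt (fun y => κ * Real.log (y - a)) (κ * (1 / (x - a))) x := fun x hx => by
    simpa using (((hasDerivAt_id x).sub_const a).log (sub_pos.2 hx.1).ne').const_mul κ
  have hmono : MonotoneOn (fun x => f x - κ * Real.log (x - a)) (Ioo a e) := by
    refine monotoneOn_of_hasDerivWithinAt_nonneg (convex_Ioo a e)
      (fun x hx => ((he hx).1.continuousAt.sub (hlog x hx).continuousAt).continuousWithinAt)
      (fun x hx => (((he (interior_subset hx)).1.sub
        (hlog x (interior_subset hx))).hasDerivWithinAt)) (fun x hx => ?_)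
    rw [interior_Ioo] at hx
    have hxa : 0 < x - a := sub_pos.2 hx.1
    rw [sub_nonneg, mul_one_div, div_le_iff₀ hxa, mul_comm]
    exact (he hx).2
  obtain ⟨x₀, hx₀⟩ := exists_between hae
  have hlog_atBot : Tendsto (fun x => Real.log (x - a)) (𝓝[>] a) atBot :=
    Real.tendsto_log_nhdsGT_zero.comp <| tendsto_nhdsWithin_of_tendsto_nhds_of_eventually_within _
      (by simpa using (continuous_sub_right a).continuousWithinAt.tendsto (x := a) (s := Ioi a))
      (eventually_nhdsWithin_of_forall fun _ hx => mem_Ioi.2 (sub_pos.2 hx))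
  refine tendsto_atBot_mono' _ ?_ (tendsto_atBot_add_const_left _
    (f x₀ - κ * Real.log (x₀ - a)) (hlog_atBot.const_mul_atBot hκ))
  filter_upwards [Ioc_mem_nhdsGT hx₀.1] with x hx
  have := hmono ⟨hx.1, hx.2.trans_lt hx₀.2⟩ hx₀ hx.2
  linarith

theorem nonpos_of_tendsto_mul_deriv {f f' : ℝ → ℝ} {a L m : ℝ}
    (hf : ∀ᶠ x in 𝓝[>] a, HasDerivAt f (f' x) x) (hfL : Tendsto f (𝓝[>] a) (𝓝 L))
    (hm : Tendsto (fun x => (x - a) * f' x) (𝓝[>] a) (𝓝 m)) : m ≤ 0 := by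
  by_contra! hpos
  exact not_tendsto_nhds_of_tendsto_atBot (tendsto_atBot_of_le_mul_deriv (half_pos hpos) hf
    ((hm.eventually_const_lt (half_lt_self hpos)).mono fun _ => le_of_lt)) L hfL

theorem eq_zero_of_tendsto_mul_deriv {f f' : ℝ → ℝ} {a L m : ℝ}
    (hf : ∀ᶠ x in 𝓝[>] a, HasDerivAt f (f' x) x) (hfL : Tendsto f (𝓝[>] a) (𝓝 L))
    (hm : Tendsto (fun x => (x - a) * f' x) (𝓝[>] a) (𝓝 m)) : m = 0 := by
  refine le_antisymm (nonpos_of_tendsto_mul_deriv hf hfL hm) (neg_nonpos.1 ?_)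
  exact nonpos_of_tendsto_mul_deriv (hf.mono fun _ h => h.neg) hfL.neg
    (by simpa only [mul_neg] using hm.neg)

theorem not_eventually_le_abs_of_riccati_ineq {U U' : ℝ → ℝ} {a κ M : ℝ} (hκ : 0 < κ)
    (hM : 0 < M) (hU : ∀ᶠ x in 𝓝[>] a, HasDerivAt U (U' x) x)
    (hsq : ∀ᶠ x in 𝓝[>] a, M ≤ |U x| → (x - a) * U' x ≤ -κ * U x ^ 2) :
    ¬ ∀ᶠ x in 𝓝[>] a, M ≤ |U x| := by
  intro hbig
  have hinv : Tendsto (fun x => (U x)⁻¹) (𝓝[>] a) atBot := by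
    refine tendsto_atBot_of_le_mul_deriv (f' := fun x => -U' x / U x ^ 2) hκ ?_ ?_
    · filter_upwards [hU, hbig] with x hd hx
      exact hd.inv (abs_pos.1 (hM.trans_le hx))
    · filter_upwards [hsq, hbig] with x hs hx
      have hx2 : 0 < U x ^ 2 := by nlinarith [sq_abs (U x)]
      rw [mul_div_assoc', mul_neg, le_div_iff₀ hx2]
      linarith [hs hx]
  have hbounded : ∀ᶠ x in 𝓝[>] a, -M⁻¹ ≤ (U x)⁻¹ := hbig.mono fun x hx => by
    have := inv_anti₀ hM hx
    rw [← abs_inv] at this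
    exact neg_le_of_abs_le this
  obtain ⟨x, hx₁, hx₂⟩ := ((hinv.eventually_lt_atBot (-M⁻¹)).and hbounded).exists
  linarith

theorem eventually_abs_le_of_riccati_ineq {U U' : ℝ → ℝ} {a κ M : ℝ} (hκ : 0 < κ)
    (hM : 0 < M) (hU : ∀ᶠ x in 𝓝[>] a, HasDerivAt U (U' x) x)
    (hsq : ∀ᶠ x in 𝓝[>] a, M ≤ |U x| → (x - a) * U' x ≤ -κ * U x ^ 2) :
    ∀ᶠ x in 𝓝[>] a, |U x| ≤ M := by
  have hdecr : ∀ᶠ x in 𝓝[>] a, M ≤ |U x| → U' x < 0 := by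
    filter_upwards [hsq, self_mem_nhdsWithin] with x hs (hx : a < x) hUx
    have hx2 : 0 < U x ^ 2 := by nlinarith [sq_abs (U x)]
    exact neg_of_mul_neg_right ((hs hUx).trans_lt (by nlinarith)) (sub_nonneg.2 hx.le)
  have hnot := not_eventually_le_abs_of_riccati_ineq hκ hM hU hsq
  have hupper : ∀ᶠ x in 𝓝[>] a, U x ≤ M := by
    by_contra h
    rw [not_eventually] at h
    refine hnot ((eventually_le_of_frequently_le hU ?_ (h.mono fun _ hx => (not_le.1 hx).le)).mono
      fun x hx => hx.trans (le_abs_self _))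
    exact hdecr.mono fun x hx hUx => hx (by rw [hUx, abs_of_pos hM])
  have hlower : ∀ᶠ x in 𝓝[>] a, -M ≤ U x := by
    by_cases h : ∃ᶠ x in 𝓝[>] a, -M ≤ U x
    · exact eventually_le_of_frequently_le hU
        (hdecr.mono fun x hx hUx => hx (by rw [hUx, abs_neg, abs_of_pos hM])) h
    · refine absurd ((not_frequently.1 h).mono fun x hx => ?_) hnot
      exact le_abs.2 (Or.inr (by linarith [not_le.1 hx]))
  filter_upwards [hupper, hlower] with x h₁ h₂ using abs_le.2 ⟨h₂, h₁⟩

noncomputable def riccatiRHS (H : ℝ → ℝ) (x u : ℝ) : ℝ :=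
  (H x - 2 * x * u - u ^ 2 / 2) / (1 - x)

theorem riccatiRHS_neg_one (H : ℝ → ℝ) (c : ℝ) :
    riccatiRHS H (-1) c = (H (-1) + 2 * c - c ^ 2 / 2) / 2 := by
  rw [riccatiRHS]
  ring

theorem riccatiRHS_le_neg_sq {H : ℝ → ℝ} {x u K : ℝ} (hx : x ∈ Ioo (-1) 1) (hH : |H x| ≤ K)
    (hu : K + 16 ≤ |u|) : riccatiRHS H x u ≤ -(1 / 8) * u ^ 2 := by
  rw [riccatiRHS, div_le_iff₀ (by linarith [hx.2])]
  have hxu : |x * u| ≤ |u| := by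
    rw [abs_mul]
    exact mul_le_of_le_one_left (abs_nonneg u) (abs_le.2 ⟨hx.1.le, hx.2.le⟩)
  nlinarith [sq_abs u, abs_nonneg (H x), le_abs_self (H x), neg_abs_le (x * u), hx.1, hx.2]

theorem tendsto_riccatiRHS {H v : ℝ → ℝ} {c : ℝ} (hH : ContinuousWithinAt H (Ioi (-1)) (-1))
    (hv : Tendsto v (𝓝[>] (-1)) (𝓝 c)) :
    Tendsto (fun x => riccatiRHS H x (v x)) (𝓝[>] (-1)) (𝓝 (riccatiRHS H (-1) c)) := by
  have hx : Tendsto (fun x : ℝ => x) (𝓝[>] (-1)) (𝓝 (-1)) := nhdsWithin_le_nhds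
  exact ((hH.tendsto.sub ((tendsto_const_nhds.mul hx).mul hv)).sub
    ((hv.pow 2).div_const 2)).div (tendsto_const_nhds.sub hx) (by norm_num)

theorem exists_mem_Ioo_riccatiRHS_ne (H : ℝ → ℝ) {p q : ℝ} (hpq : p < q) :
    ∃ c ∈ Ioo p q, riccatiRHS H (-1) c ≠ 0 := by
  by_contra! h
  simp only [riccatiRHS_neg_one, div_eq_zero_iff, two_ne_zero, or_false] at h
  -- distinct roots of `2 c - c² / 2 = -H (-1)` sum to `4`, so there are at most two of them
  have h₁ := h ((3 * p + q) / 4) ⟨by linarith, by linarith⟩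
  have h₂ := h ((p + q) / 2) ⟨by linarith, by linarith⟩
  have h₃ := h ((p + 3 * q) / 4) ⟨by linarith, by linarith⟩
  nlinarith [mul_pos (sub_pos.2 hpq) (sub_pos.2 hpq)]

section

variable {H U U' : ℝ → ℝ}

theorem eventually_abs_le_of_riccati
    (hH : ContinuousWithinAt H (Ioi (-1)) (-1)) (hU : ∀ᶠ x in 𝓝[>] (-1), HasDerivAt U (U' x) x)
    (hODE : ∀ᶠ x in 𝓝[>] (-1), (x + 1) * U' x = riccatiRHS H x (U x)) :
    ∃ M, ∀ᶠ x in 𝓝[>] (-1), |U x| ≤ M := by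
  have hK : ∀ᶠ x in 𝓝[>] (-1), |H x| ≤ |H (-1)| + 1 :=
    (hH.tendsto.abs.eventually_lt_const (lt_add_one _)).mono fun _ => le_of_lt
  refine ⟨|H (-1)| + 1 + 16, eventually_abs_le_of_riccati_ineq (κ := 1 / 8) (by norm_num)
    (by positivity) hU ?_⟩
  filter_upwards [hODE, hK, Ioo_mem_nhdsGT (show (-1 : ℝ) < 1 by norm_num)] with x hx hKx hx₁ hu
  rw [sub_neg_eq_add, hx]
  exact riccatiRHS_le_neg_sq hx₁ hKx hu

theorem eventually_deriv_neg_at_level {c : ℝ}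
    (hH : ContinuousWithinAt H (Ioi (-1)) (-1))
    (hODE : ∀ᶠ x in 𝓝[>] (-1), (x + 1) * U' x = riccatiRHS H x (U x))
    (hc : riccatiRHS H (-1) c < 0) : ∀ᶠ x in 𝓝[>] (-1), U x = c → U' x < 0 := by
  filter_upwards [hODE, (tendsto_riccatiRHS hH tendsto_const_nhds).eventually_lt_const hc,
    self_mem_nhdsWithin] with x hx hneg (hx₁ : -1 < x) hUx
  rw [← hUx, ← hx] at hneg
  exact neg_of_mul_neg_right hneg (by linarith)

theorem eventually_deriv_pos_at_level {c : ℝ}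
    (hH : ContinuousWithinAt H (Ioi (-1)) (-1))
    (hODE : ∀ᶠ x in 𝓝[>] (-1), (x + 1) * U' x = riccatiRHS H x (U x))
    (hc : 0 < riccatiRHS H (-1) c) : ∀ᶠ x in 𝓝[>] (-1), U x = c → 0 < U' x := by
  filter_upwards [hODE, (tendsto_riccatiRHS hH tendsto_const_nhds).eventually_const_lt hc,
    self_mem_nhdsWithin] with x hx hpos (hx₁ : -1 < x) hUx
  rw [← hUx, ← hx] at hpos
  exact pos_of_mul_pos_right hpos (by linarith)

theorem exists_tendsto_of_riccati
    (hH : ContinuousWithinAt H (Ioi (-1)) (-1)) (hU : ∀ᶠ x in 𝓝[>] (-1), HasDerivAt U (U' x) x)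
    (hODE : ∀ᶠ x in 𝓝[>] (-1), (x + 1) * U' x = riccatiRHS H x (U x)) :
    ∃ L, Tendsto U (𝓝[>] (-1)) (𝓝 L) := by
  obtain ⟨M, hM⟩ := eventually_abs_le_of_riccati hH hU hODE
  have hle : IsBoundedUnder (· ≤ ·) (𝓝[>] (-1)) U :=
    isBoundedUnder_of_eventually_le (hM.mono fun _ h => (abs_le.1 h).2)
  have hge : IsBoundedUnder (· ≥ ·) (𝓝[>] (-1)) U :=
    isBoundedUnder_of_eventually_ge (hM.mono fun _ h => (abs_le.1 h).1)
  refine ⟨limsup U (𝓝[>] (-1)), tendsto_of_liminf_eq_limsup ?_ rfl hle hge⟩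
  by_contra hne
  obtain ⟨c, ⟨hc₁, hc₂⟩, hc⟩ :=
    exists_mem_Ioo_riccatiRHS_ne H ((liminf_le_limsup hle hge).lt_of_ne hne)
  -- near `-1` the level `c` is crossed in one direction only, so `U` cannot oscillate around it
  rcases hc.lt_or_gt with hneg | hpos
  · have hfreq : ∃ᶠ x in 𝓝[>] (-1), c ≤ U x :=
      (frequently_lt_of_lt_limsup hge.isCoboundedUnder_le hc₂).mono fun _ => le_of_lt
    exact hc₁.not_ge (le_liminf_of_le hle.isCoboundedUnder_ge
      (eventually_le_of_frequently_le hU (eventually_deriv_neg_at_level hH hODE hneg) hfreq))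
  · have hfreq : ∃ᶠ x in 𝓝[>] (-1), -c ≤ -U x :=
      (frequently_lt_of_liminf_lt hle.isCoboundedUnder_ge hc₁).mono fun _ h => neg_le_neg h.le
    have hcross : ∀ᶠ x in 𝓝[>] (-1), -U x = -c → -U' x < 0 :=
      (eventually_deriv_pos_at_level hH hODE hpos).mono fun _ h hx =>
        neg_lt_zero.2 (h (neg_inj.1 hx))
    have hbelow := eventually_le_of_frequently_le (hU.mono fun _ h => h.neg) hcross hfreq
    exact hc₂.not_ge
      (limsup_le_of_le hge.isCoboundedUnder_le (hbelow.mono fun _ => neg_le_neg_iff.1))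

theorem riccatiRHS_eq_zero_of_tendsto {L : ℝ}
    (hH : ContinuousWithinAt H (Ioi (-1)) (-1)) (hU : ∀ᶠ x in 𝓝[>] (-1), HasDerivAt U (U' x) x)
    (hODE : ∀ᶠ x in 𝓝[>] (-1), (x + 1) * U' x = riccatiRHS H x (U x))
    (hL : Tendsto U (𝓝[>] (-1)) (𝓝 L)) : riccatiRHS H (-1) L = 0 :=
  eq_zero_of_tendsto_mul_deriv hU hL <|
    (tendsto_riccatiRHS hH hL).congr' (hODE.mono fun x hx => by simp only [sub_neg_eq_add, hx])

end

theorem eq_sub_sqrt_or_eq_add_sqrt {t s d : ℝ} (h : (t - s) ^ 2 = d) :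
    t = s - √d ∨ t = s + √d := by
  rw [← h, Real.sqrt_sq_eq_abs]
  rcases abs_choice (t - s) with h' | h' <;> rw [h']
  · exact Or.inr (by ring)
  · exact Or.inl (by ring)

theorem stmt6_general (δ : ℝ) (hδ : 0 < δ) (H U U' : ℝ → ℝ)
    (hH : ContinuousOn H (Icc (-1 : ℝ) (-1 + δ)))
    (hU : ∀ x ∈ Ioc (-1 : ℝ) (-1 + δ),
      HasDerivWithinAt U (U' x) (Ioc (-1 : ℝ) (-1 + δ)) x)
    (heq : ∀ x ∈ Ioo (-1 : ℝ) (-1 + δ),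
      (1 - x ^ 2) * U' x + 2 * x * U x + (1 / 2) * (U x) ^ 2 = H x) :
    H (-1) ≥ -2 ∧
    ∃ τ : ℝ, Tendsto U (𝓝[>] (-1)) (𝓝 τ) ∧
      (τ = 2 - Real.sqrt (4 + 2 * H (-1)) ∨ τ = 2 + Real.sqrt (4 + 2 * H (-1))) := by
  have hH₀ : ContinuousWithinAt H (Ioi (-1)) (-1) :=
    (hH (-1) ⟨le_rfl, by linarith⟩).mono_of_mem_nhdsWithin (Icc_mem_nhdsGT (by linarith))
  have hdom : Ioo (-1 : ℝ) (-1 + δ) ∈ 𝓝[>] (-1) := Ioo_mem_nhdsGT (by linarith)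
  have hU₀ : ∀ᶠ x in 𝓝[>] (-1), HasDerivAt U (U' x) x := eventually_of_mem hdom fun x hx =>
    (hU x (Ioo_subset_Ioc_self hx)).hasDerivAt (Ioc_mem_nhds hx.1 hx.2)
  have hODE : ∀ᶠ x in 𝓝[>] (-1), (x + 1) * U' x = riccatiRHS H x (U x) := by
    filter_upwards [hdom, Ioo_mem_nhdsGT (show (-1 : ℝ) < 1 by norm_num)] with x hx hx₁
    rw [riccatiRHS, eq_div_iff (by linarith [hx₁.2])]
    linear_combination heq x hx
  obtain ⟨L, hL⟩ := exists_tendsto_of_riccati hH₀ hU₀ hODE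
  have hroot : (L - 2) ^ 2 = 4 + 2 * H (-1) := by
    have := riccatiRHS_eq_zero_of_tendsto hH₀ hU₀ hODE hL
    rw [riccatiRHS_neg_one] at this
    linear_combination -4 * this
  exact ⟨by nlinarith [sq_nonneg (L - 2)], L, hL, eq_sub_sqrt_or_eq_add_sqrt hroot⟩

/-- For a C¹ solution U of (1-x²)U' + 2xU + U²/2 = H on (-1,-1+δ) with H continuous
on [-1,-1+δ]: H(-1) ≥ -2, the limit of U at -1⁺ exists, and it equals
2 - √(4+2H(-1)) or 2 + √(4+2H(-1)). -/
theorem stmt6 (δ : ℝ) (hδ : 0 < δ) (H U U' : ℝ → ℝ)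
    (hH : ContinuousOn H (Icc (-1 : ℝ) (-1 + δ)))
    (hU : ∀ x ∈ Ioc (-1 : ℝ) (-1 + δ),
      HasDerivWithinAt U (U' x) (Ioc (-1 : ℝ) (-1 + δ)) x)
    (hU' : ContinuousOn U' (Ioc (-1 : ℝ) (-1 + δ)))
    (heq : ∀ x ∈ Ioo (-1 : ℝ) (-1 + δ),
      (1 - x ^ 2) * U' x + 2 * x * U x + (1 / 2) * (U x) ^ 2 = H x) :
    H (-1) ≥ -2 ∧
    ∃ τ : ℝ, Tendsto U (𝓝[>] (-1)) (𝓝 τ) ∧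
      (τ = 2 - Real.sqrt (4 + 2 * H (-1)) ∨ τ = 2 + Real.sqrt (4 + 2 * H (-1))) :=
  stmt6_general δ hδ H U U' hH hU heq
end

section
/- Let δ > 0 and let a, b, H be continuous on (-1,-1+δ] with a(x) > 0 for all x ∈ (-1,-1+δ). Assume b⁺ and H⁺ are bounded on (-1,-1+δ). Suppose g ∈ C¹((-1,-1+δ]) satisfies the Riccati-type equation on (-1,-1+δ). Then g(x) ≥ -max{ 4·sup_{(-1,-1+δ)} b⁺, √(8·sup_{(-1,-1+δ)} H⁺), -g(-1+δ) } for all x ∈ (-1,-1+δ). -/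
/-!
Let `M` be the maximum in the bound. Where `g < -M`, put `t = -g > M ≥ 0`; the equation gives
`a g' = H + b t - t²/2 ≤ t²/8 + t²/4 - t²/2 < 0`, because `8 sup H⁺ ≤ M² < t²` and
`4 sup b⁺ ≤ M < t`. So `g` is strictly decreasing wherever it lies below `-M`, and since
`g (-1 + δ) ≥ -M` it cannot cross any level `c < -M` when followed from `-1 + δ` to the left:
a fencing argument run right to left.
-/

open Set Filter

theorem le_image_of_deriv_left_neg_boundary {g g' : ℝ → ℝ} {a b c : ℝ}
    (hg : ContinuousOn g (Icc a b)) (hg' : ∀ x ∈ Ioc a b, HasDerivWithinAt g (g' x) (Iic x) x)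
    (hb : c ≤ g b) (bound : ∀ x ∈ Ioc a b, g x = c → g' x < 0) :
    ∀ ⦃x⦄, x ∈ Icc a b → c ≤ g x := by
  have hfence := image_le_of_deriv_right_lt_deriv_boundary' (f := fun s ↦ -g (-s))
    (f' := fun s ↦ g' (-s)) (a := -b) (b := -a) (B := fun _ ↦ -c) (B' := fun _ ↦ 0)
    ((hg.comp continuous_neg.continuousOn fun s hs ↦ ⟨le_neg.2 hs.2, neg_le.1 hs.1⟩).neg)
    (fun s hs ↦ by
      have hmem : -s ∈ Ioc a b := ⟨lt_neg.2 hs.2, neg_le.1 hs.1⟩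
      have hcomp : HasDerivWithinAt (fun t ↦ g (-t)) (g' (-s) * -1) (Ici s) s :=
        (hg' (-s) hmem).comp s (hasDerivWithinAt_neg s (Ici s))
          fun _ ht ↦ neg_le_neg (mem_Ici.1 ht)
      simpa using hcomp.fun_neg)
    (by simpa using hb) continuousOn_const (fun _ _ ↦ hasDerivWithinAt_const _ _ _)
    (fun s hs hs' ↦ bound (-s) ⟨lt_neg.2 hs.2, neg_le.1 hs.1⟩ (neg_inj.1 hs'))
  intro x hx
  simpa using hfence (x := -x) ⟨neg_le_neg hx.2, neg_le_neg hx.1⟩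

theorem deriv_neg_of_riccati {a b H g g' B K M : ℝ} (ha : 0 < a)
    (heq : a * g' + b * g + (1 / 2) * g ^ 2 = H) (hb : b ≤ B) (hH : H ≤ K)
    (hBM : 4 * B ≤ M) (hM : 0 ≤ M) (hKM : 8 * K ≤ M ^ 2) (hg : g < -M) : g' < 0 := by
  have hag' : a * g' < 0 := by nlinarith
  exact neg_of_mul_neg_right hag' ha.le

theorem le_csSup_image_max_zero {f : ℝ → ℝ} {s : Set ℝ}
    (hf : BddAbove ((fun x ↦ max (f x) 0) '' s)) {x : ℝ} (hx : x ∈ s) :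
    f x ≤ sSup ((fun x ↦ max (f x) 0) '' s) :=
  (le_max_left _ _).trans (le_csSup hf (mem_image_of_mem _ hx))

theorem stmt12_general (δ : ℝ) (a b H g g' : ℝ → ℝ)
    (hapos : ∀ x ∈ Ioo (-1 : ℝ) (-1 + δ), 0 < a x)
    (hbpBdd : BddAbove ((fun x => max (b x) 0) '' Ioo (-1 : ℝ) (-1 + δ)))
    (hHpBdd : BddAbove ((fun x => max (H x) 0) '' Ioo (-1 : ℝ) (-1 + δ)))
    (hg : ∀ x ∈ Ioc (-1 : ℝ) (-1 + δ),
      HasDerivWithinAt g (g' x) (Ioc (-1 : ℝ) (-1 + δ)) x)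
    (heq : ∀ x ∈ Ioo (-1 : ℝ) (-1 + δ),
      a x * g' x + b x * g x + (1 / 2) * (g x) ^ 2 = H x) :
    ∀ x ∈ Ioo (-1 : ℝ) (-1 + δ),
      -(max (max (4 * sSup ((fun x => max (b x) 0) '' Ioo (-1 : ℝ) (-1 + δ)))
          (Real.sqrt (8 * sSup ((fun x => max (H x) 0) '' Ioo (-1 : ℝ) (-1 + δ)))))
        (-(g (-1 + δ)))) ≤ g x := by
  intro x hx
  set M := max (max (4 * sSup ((fun x => max (b x) 0) '' Ioo (-1 : ℝ) (-1 + δ)))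
    (Real.sqrt (8 * sSup ((fun x => max (H x) 0) '' Ioo (-1 : ℝ) (-1 + δ))))) (-(g (-1 + δ)))
  obtain ⟨hM, hHM⟩ := Real.sqrt_le_iff.1 ((le_max_right _ _).trans (le_max_left _ _) : _ ≤ M)
  have hgM : -g (-1 + δ) ≤ M := le_max_right _ _
  have hsub : Icc x (-1 + δ) ⊆ Ioc (-1) (-1 + δ) := fun y hy ↦ ⟨hx.1.trans_le hy.1, hy.2⟩
  refine le_of_forall_lt_imp_le_of_dense fun c hc ↦ ?_
  refine le_image_of_deriv_left_neg_boundary (g' := g')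
    (fun y hy ↦ (hg y (hsub hy)).continuousWithinAt.mono hsub)
    (fun y hy ↦ (hg y (hsub (Ioc_subset_Icc_self hy))).mono_of_mem_nhdsWithin
      (mem_of_superset (Ioc_mem_nhdsLE (hx.1.trans hy.1)) (Ioc_subset_Ioc_right hy.2)))
    (by linarith) (fun y hy hyc ↦ ?_) ⟨le_rfl, hx.2.le⟩
  have hy : y ∈ Ioo (-1 : ℝ) (-1 + δ) := by
    refine ⟨hx.1.trans hy.1, hy.2.lt_of_ne ?_⟩
    rintro rfl
    linarith
  exact deriv_neg_of_riccati (hapos y hy) (heq y hy) (le_csSup_image_max_zero hbpBdd hy)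
    (le_csSup_image_max_zero hHpBdd hy) ((le_max_left _ _).trans (le_max_left _ _)) hM
    (by linarith) (by linarith)

/-- Lower bound for C¹ solutions of the Riccati-type equation when a > 0. -/
theorem stmt12 (δ : ℝ) (hδ : 0 < δ) (a b H g g' : ℝ → ℝ)
    (ha : ContinuousOn a (Ioc (-1 : ℝ) (-1 + δ)))
    (hb : ContinuousOn b (Ioc (-1 : ℝ) (-1 + δ)))
    (hH : ContinuousOn H (Ioc (-1 : ℝ) (-1 + δ)))
    (hapos : ∀ x ∈ Ioo (-1 : ℝ) (-1 + δ), 0 < a x)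
    (hbpBdd : BddAbove ((fun x => max (b x) 0) '' Ioo (-1 : ℝ) (-1 + δ)))
    (hHpBdd : BddAbove ((fun x => max (H x) 0) '' Ioo (-1 : ℝ) (-1 + δ)))
    (hg : ∀ x ∈ Ioc (-1 : ℝ) (-1 + δ),
      HasDerivWithinAt g (g' x) (Ioc (-1 : ℝ) (-1 + δ)) x)
    (hg' : ContinuousOn g' (Ioc (-1 : ℝ) (-1 + δ)))
    (heq : ∀ x ∈ Ioo (-1 : ℝ) (-1 + δ),
      a x * g' x + b x * g x + (1 / 2) * (g x) ^ 2 = H x) :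
    ∀ x ∈ Ioo (-1 : ℝ) (-1 + δ),
      -(max (max (4 * sSup ((fun x => max (b x) 0) '' Ioo (-1 : ℝ) (-1 + δ)))
          (Real.sqrt (8 * sSup ((fun x => max (H x) 0) '' Ioo (-1 : ℝ) (-1 + δ)))))
        (-(g (-1 + δ)))) ≤ g x :=
  stmt12_general δ a b H g g' hapos hbpBdd hHpBdd hg heq
end

section
/- Let δ > 0 and let a, b, H be continuous on (-1,-1+δ] with a(x) > 0 for all x ∈ (-1,-1+δ), and assume ∫_{x}^{-1+δ} ds/a(s) → +∞ as x → -1⁺. Assume b⁻ and H⁺ are bounded on (-1,-1+δ). Suppose g ∈ C¹((-1,-1+δ]) satisfies the Riccati-type equation on (-1,-1+δ). Then g(x) ≤ max{ 4·sup_{(-1,-1+δ)} b⁻, √(8·sup_{(-1,-1+δ)} H⁺) } for all x ∈ (-1,-1+δ). -/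
/-!
Let `M = max (4 sup b⁻) (√(8 sup H⁺))`. Wherever `g ≥ M` the equation gives
`a g' = H - b g - g²/2 ≤ g²/8 + g²/4 - g²/2 = -g²/8`, so `g` decreases there. Hence if `g(x₀) > M`,
then `g` stays above a level `c ∈ (M, g(x₀))` on all of `(-1, x₀]`, and `(1/g)' ≥ 1/(8a)` there.
Integrating, `∫ₓ^{x₀} ds/a(s) ≤ 8/g(x₀)` for every `x ∈ (-1, x₀)`, contradicting the divergence
of `∫ₓ ds/a(s)` as `x → -1⁺`.
-/

open Set Filter Topology MeasureTheory

lemma riccati_mul_deriv_le {a b H g g' B K : ℝ} (h : a * g' + b * g + (1 / 2) * g ^ 2 = H)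
    (hb : -b ≤ B) (hH : H ≤ K) (hB : 4 * B ≤ g) (hK : √(8 * K) ≤ g) :
    a * g' ≤ -g ^ 2 / 8 := by
  obtain ⟨hg, hK⟩ := Real.sqrt_le_iff.mp hK
  nlinarith [mul_le_mul_of_nonneg_right hb hg]

lemma lt_of_lt_of_deriv_neg_at_level {f f' : ℝ → ℝ} {x y c : ℝ} (hxy : x ≤ y)
    (hf : ∀ z ∈ Icc x y, HasDerivAt f (f' z) z) (hc : ∀ z ∈ Ico x y, f z = c → f' z < 0)
    (hy : c < f y) : c < f x := by
  by_contra! hx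
  have := image_le_of_deriv_right_lt_deriv_boundary (B := fun _ => c) (B' := fun _ => 0)
    (fun z hz => (hf z hz).continuousAt.continuousWithinAt)
    (fun z hz => (hf z (Ico_subset_Icc_self hz)).hasDerivWithinAt) hx
    (fun _ => hasDerivAt_const _ _) hc ⟨hxy, le_rfl⟩
  exact this.not_gt hy

lemma integral_one_div_le_of_mul_deriv_le {a g g' : ℝ → ℝ} {x y c : ℝ} (hxy : x ≤ y)
    (hc : 0 < c) (hg : ∀ z ∈ Icc x y, HasDerivAt g (g' z) z) (hpos : ∀ z ∈ Icc x y, 0 < g z)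
    (ha : ∀ z ∈ Ioo x y, 0 < a z) (hle : ∀ z ∈ Ioo x y, a z * g' z ≤ -g z ^ 2 / c) :
    ∫ s in x..y, 1 / a s ≤ c / g y := by
  have hgy : 0 < c / g y := div_pos hc (hpos y ⟨hxy, le_rfl⟩)
  by_cases hint : IntervalIntegrable (fun s => 1 / a s) volume x y
  swap
  · rw [intervalIntegral.integral_undef hint]
    exact hgy.le
  have hderiv : ∀ z ∈ Icc x y, HasDerivAt (fun z => c * (g z)⁻¹) (c * (-g' z / g z ^ 2)) z :=
    fun z hz => ((hg z hz).inv (hpos z hz).ne').const_mul c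
  calc ∫ s in x..y, 1 / a s ≤ c * (g y)⁻¹ - c * (g x)⁻¹ := by
        refine intervalIntegral.integral_le_sub_of_hasDeriv_right_of_le hxy
          (fun z hz => (hderiv z hz).continuousAt.continuousWithinAt)
          (fun z hz => (hderiv z (Ioo_subset_Icc_self hz)).hasDerivWithinAt)
          ((intervalIntegrable_iff_integrableOn_Icc_of_le hxy).mp hint) fun z hz => ?_
        have hgz := hpos z (Ioo_subset_Icc_self hz)
        have hle' := (le_div_iff₀ hc).mp (hle z hz)
        rw [mul_div_assoc', div_le_div_iff₀ (ha z hz) (by positivity)]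
        nlinarith
    _ ≤ c / g y := by
        rw [← div_eq_mul_inv]
        exact sub_le_self _ (by have := hpos x ⟨le_rfl, hxy⟩; positivity)

lemma tendsto_integral_atTop_of_mem_Ioc {f : ℝ → ℝ} {l b c : ℝ}
    (h : Tendsto (fun x => ∫ s in x..b, f s) (𝓝[>] l) atTop) (hc : c ∈ Ioc l b) :
    Tendsto (fun x => ∫ s in x..c, f s) (𝓝[>] l) atTop := by
  have hint : ∀ᶠ x in 𝓝[>] l, IntervalIntegrable f volume x b :=
    (h.eventually_gt_atTop 0).mono fun x hx => by
      by_contra hni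
      rw [intervalIntegral.integral_undef hni] at hx
      exact hx.false
  have hsplit : ∀ᶠ x in 𝓝[>] l,
      (∫ s in x..b, f s) - ∫ s in c..b, f s = ∫ s in x..c, f s := by
    filter_upwards [hint, Ioo_mem_nhdsGT hc.1] with x hxb hx
    have hcx : c ∈ uIcc x b := by
      rw [uIcc_of_le (hx.2.le.trans hc.2)]
      exact ⟨hx.2.le, hc.2⟩
    rw [sub_eq_iff_eq_add, intervalIntegral.integral_add_adjacent_intervals
      (hxb.mono_set (uIcc_subset_uIcc_left hcx)) (hxb.mono_set (uIcc_subset_uIcc_right hcx))]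
  exact (tendsto_atTop_add_const_right _ _ h).congr' hsplit

theorem stmt13_general (δ : ℝ) (a b H g g' : ℝ → ℝ)
    (hapos : ∀ x ∈ Ioo (-1 : ℝ) (-1 + δ), 0 < a x)
    (haInt : Tendsto (fun x => ∫ s in x..(-1 + δ), 1 / a s) (𝓝[>] (-1)) atTop)
    (hbmBdd : BddAbove ((fun x => max (-b x) 0) '' Ioo (-1 : ℝ) (-1 + δ)))
    (hHpBdd : BddAbove ((fun x => max (H x) 0) '' Ioo (-1 : ℝ) (-1 + δ)))
    (hg : ∀ x ∈ Ioc (-1 : ℝ) (-1 + δ),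
      HasDerivWithinAt g (g' x) (Ioc (-1 : ℝ) (-1 + δ)) x)
    (heq : ∀ x ∈ Ioo (-1 : ℝ) (-1 + δ),
      a x * g' x + b x * g x + (1 / 2) * (g x) ^ 2 = H x) :
    ∀ x ∈ Ioo (-1 : ℝ) (-1 + δ),
      g x ≤ max (4 * sSup ((fun x => max (-b x) 0) '' Ioo (-1 : ℝ) (-1 + δ)))
        (Real.sqrt (8 * sSup ((fun x => max (H x) 0) '' Ioo (-1 : ℝ) (-1 + δ)))) := by
  intro x₀ hx₀
  set M := max (4 * sSup ((fun x => max (-b x) 0) '' Ioo (-1 : ℝ) (-1 + δ)))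
    (Real.sqrt (8 * sSup ((fun x => max (H x) 0) '' Ioo (-1 : ℝ) (-1 + δ))))
  by_contra! hx₀M
  have hM : 0 ≤ M := (Real.sqrt_nonneg _).trans (le_max_right _ _)
  have hderiv : ∀ z ∈ Ioo (-1 : ℝ) (-1 + δ), HasDerivAt g (g' z) z := fun z hz =>
    (hg z (Ioo_subset_Ioc_self hz)).hasDerivAt (Ioc_mem_nhds hz.1 hz.2)
  have hdecay : ∀ z ∈ Ioo (-1 : ℝ) (-1 + δ), M ≤ g z → a z * g' z ≤ -g z ^ 2 / 8 :=
    fun z hz hMz => riccati_mul_deriv_le (heq z hz)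
      ((le_max_left _ _).trans (le_csSup hbmBdd (mem_image_of_mem _ hz)))
      ((le_max_left _ _).trans (le_csSup hHpBdd (mem_image_of_mem _ hz)))
      ((le_max_left _ _).trans hMz) ((le_max_right _ _).trans hMz)
  -- a level strictly above `M ≥ 0`, where the decay `a g' ≤ -g²/8` forces `g' < 0` strictly
  set c := (M + g x₀) / 2 with hc
  have hsub : ∀ x ∈ Ioo (-1 : ℝ) x₀, Icc x x₀ ⊆ Ioo (-1 : ℝ) (-1 + δ) := fun x hx z hz =>
    ⟨hx.1.trans_le hz.1, hz.2.trans_lt hx₀.2⟩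
  have habove : ∀ x ∈ Ioo (-1 : ℝ) x₀, ∀ z ∈ Icc x x₀, M < g z := fun x hx z hz => by
    refine lt_trans (by linarith) (lt_of_lt_of_deriv_neg_at_level (c := c) hz.2
      (fun w hw => hderiv w (hsub x hx ⟨hz.1.trans hw.1, hw.2⟩)) (fun w hw hwc => ?_) (by linarith))
    have hwI := hsub x hx ⟨hz.1.trans hw.1, hw.2.le⟩
    have := hdecay w hwI (by linarith)
    nlinarith [hapos w hwI]
  obtain ⟨x, hx_large, hx⟩ := ((tendsto_integral_atTop_of_mem_Ioc haInt
    ⟨hx₀.1, hx₀.2.le⟩).eventually_gt_atTop (8 / g x₀)).and (Ioo_mem_nhdsGT hx₀.1) |>.exists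
  have hIoo : ∀ z ∈ Ioo x x₀, z ∈ Ioo (-1 : ℝ) (-1 + δ) := fun z hz =>
    hsub x hx (Ioo_subset_Icc_self hz)
  exact hx_large.not_ge <| integral_one_div_le_of_mul_deriv_le hx.2.le (by norm_num)
    (fun z hz => hderiv z (hsub x hx hz)) (fun z hz => hM.trans_lt (habove x hx z hz))
    (fun z hz => hapos z (hIoo z hz))
    (fun z hz => hdecay z (hIoo z hz) (habove x hx z (Ioo_subset_Icc_self hz)).le)

/-- Upper bound for C¹ solutions of the Riccati-type equation when a > 0 and
∫ₓ^{-1+δ} ds/a(s) → +∞ as x → -1⁺. -/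
theorem stmt13 (δ : ℝ) (hδ : 0 < δ) (a b H g g' : ℝ → ℝ)
    (ha : ContinuousOn a (Ioc (-1 : ℝ) (-1 + δ)))
    (hb : ContinuousOn b (Ioc (-1 : ℝ) (-1 + δ)))
    (hH : ContinuousOn H (Ioc (-1 : ℝ) (-1 + δ)))
    (hapos : ∀ x ∈ Ioo (-1 : ℝ) (-1 + δ), 0 < a x)
    (haInt : Tendsto (fun x => ∫ s in x..(-1 + δ), 1 / a s) (𝓝[>] (-1)) atTop)
    (hbmBdd : BddAbove ((fun x => max (-b x) 0) '' Ioo (-1 : ℝ) (-1 + δ)))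
    (hHpBdd : BddAbove ((fun x => max (H x) 0) '' Ioo (-1 : ℝ) (-1 + δ)))
    (hg : ∀ x ∈ Ioc (-1 : ℝ) (-1 + δ),
      HasDerivWithinAt g (g' x) (Ioc (-1 : ℝ) (-1 + δ)) x)
    (hg' : ContinuousOn g' (Ioc (-1 : ℝ) (-1 + δ)))
    (heq : ∀ x ∈ Ioo (-1 : ℝ) (-1 + δ),
      a x * g' x + b x * g x + (1 / 2) * (g x) ^ 2 = H x) :
    ∀ x ∈ Ioo (-1 : ℝ) (-1 + δ),
      g x ≤ max (4 * sSup ((fun x => max (-b x) 0) '' Ioo (-1 : ℝ) (-1 + δ)))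
        (Real.sqrt (8 * sSup ((fun x => max (H x) 0) '' Ioo (-1 : ℝ) (-1 + δ)))) :=
  stmt13_general δ a b H g g' hapos haInt hbmBdd hHpBdd hg heq
end

section
/- Let δ > 0, let b be continuous and bounded on (-1,-1+δ], let H be continuous on (-1,-1+δ], and let a be continuous on (-1,-1+δ], either everywhere positive or everywhere negative on this interval, with |∫_{x}^{-1+δ} ds/a(s)| → ∞ as x → -1⁺. Suppose g ∈ C¹((-1,-1+δ]) satisfies the Riccati-type equation on (-1,-1+δ). Then sup_{x ∈ (-1,-1+δ]} ( H(x) + (1/2)·b(x)² ) ≥ 0. -/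
/-!
Suppose `H + b²/2 ≤ c < 0`. Completing the square turns the equation into
`a g' ≤ c - (g + b)²/2`. Measuring time by `τ(x) = ∫ₓ^{-1+δ} ds/a(s)`, which tends to `∞`
at `-1`, this says that `g` grows at least linearly in `τ` (case `a > 0`), so `g → ∞` at `-1`.
Once `g` dominates the bounded `b`, the quadratic term gives `(1/(g - M))' ≥ 1/(2a)`, so the
positive quantity `1/(g - M)` would have to decrease by `τ/2 → ∞`. The case `a < 0` is the
case `a > 0` for `(-a, -b, -g)`.
-/

open Set Filter Topology

section RiccatiBlowup

variable {a f f' g g' : ℝ → ℝ} {l r : ℝ}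

theorem sub_le_mul_integral_one_div_of_mul_deriv_le {x k : ℝ} (hxr : x ≤ r)
    (ha : ContinuousOn a (Icc x r)) (hpos : ∀ t ∈ Icc x r, 0 < a t)
    (hf : ContinuousOn f (Icc x r)) (hf' : ∀ t ∈ Ioo x r, HasDerivAt f (f' t) t)
    (hle : ∀ t ∈ Ioo x r, a t * f' t ≤ k) :
    f r - f x ≤ k * ∫ t in x..r, 1 / a t := by
  rw [← intervalIntegral.integral_const_mul]
  refine intervalIntegral.sub_le_integral_of_hasDeriv_right_of_le hxr hf
    (fun t ht => (hf' t ht).hasDerivWithinAt) ((continuousOn_const.mul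
      (continuousOn_const.div ha fun t ht => (hpos t ht).ne')).integrableOn_compact isCompact_Icc)
    fun t ht => ?_
  rw [mul_one_div, le_div_iff₀ (hpos t (Ioo_subset_Icc_self ht)), mul_comm]
  exact hle t ht

theorem tendsto_integral_of_mem_Ioc {r' : ℝ} (hf : ContinuousOn f (Ioc l r))
    (hr' : r' ∈ Ioc l r)
    (h : Tendsto (fun x => ∫ s in x..r, f s) (𝓝[>] l) atTop) :
    Tendsto (fun x => ∫ s in x..r', f s) (𝓝[>] l) atTop := by
  refine (tendsto_atTop_add_const_right _ (-∫ s in r'..r, f s) h).congr' ?_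
  filter_upwards [Ioc_mem_nhdsGT hr'.1] with x hx
  have hint : ∀ y ∈ Icc r' r, IntervalIntegrable f MeasureTheory.volume x y := fun y hy =>
    (hf.mono (uIcc_of_le (hx.2.trans hy.1) ▸ Icc_subset_Ioc hx.1 hy.2)).intervalIntegrable
  rw [← intervalIntegral.integral_interval_sub_left (hint r ⟨hr'.2, le_rfl⟩)
    (hint r' ⟨le_rfl, hr'.2⟩)]
  ring

theorem tendsto_integral_one_div_of_tendsto_abs (hlr : l < r) (hpos : ∀ x ∈ Ioc l r, 0 < a x)
    (h : Tendsto (fun x => |∫ s in x..r, 1 / a s|) (𝓝[>] l) atTop) :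
    Tendsto (fun x => ∫ s in x..r, 1 / a s) (𝓝[>] l) atTop := by
  refine h.congr' ?_
  filter_upwards [Ioc_mem_nhdsGT hlr] with x hx
  exact abs_of_nonneg (intervalIntegral.integral_nonneg hx.2 fun t ht =>
    (one_div_pos.2 (hpos t (Icc_subset_Ioc hx.1 le_rfl ht))).le)

theorem tendsto_atTop_of_mul_deriv_le_neg {c : ℝ} (hlr : l < r) (ha : ContinuousOn a (Ioc l r))
    (hpos : ∀ x ∈ Ioc l r, 0 < a x)
    (hF : Tendsto (fun x => ∫ s in x..r, 1 / a s) (𝓝[>] l) atTop)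
    (hg : ∀ x ∈ Ioo l r, HasDerivAt g (g' x) x) (hgc : ContinuousOn g (Ioc l r))
    (hc : c < 0) (hle : ∀ x ∈ Ioo l r, a x * g' x ≤ c) : Tendsto g (𝓝[>] l) atTop := by
  refine tendsto_atTop_mono' _ ?_
    (tendsto_atTop_add_const_left _ (g r) (hF.const_mul_atTop (neg_pos.2 hc)))
  filter_upwards [Ioc_mem_nhdsGT hlr] with x hx
  have hsub : Icc x r ⊆ Ioc l r := Icc_subset_Ioc hx.1 le_rfl
  have := sub_le_mul_integral_one_div_of_mul_deriv_le hx.2 (ha.mono hsub)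
    (fun t ht => hpos t (hsub ht)) (hgc.mono hsub)
    (fun t ht => hg t (Ioo_subset_Ioo_left hx.1.le ht))
    (fun t ht => hle t (Ioo_subset_Ioo_left hx.1.le ht))
  linarith

theorem false_of_pos_of_mul_deriv_le_neg_sq (hlr : l < r) (ha : ContinuousOn a (Ioc l r))
    (hpos : ∀ x ∈ Ioc l r, 0 < a x)
    (hF : Tendsto (fun x => ∫ s in x..r, 1 / a s) (𝓝[>] l) atTop)
    (hg : ∀ x ∈ Ioo l r, HasDerivAt g (g' x) x) (hgc : ContinuousOn g (Ioc l r))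
    (hgpos : ∀ x ∈ Ioc l r, 0 < g x)
    (hle : ∀ x ∈ Ioo l r, a x * g' x ≤ -g x ^ 2 / 2) : False := by
  have hbound : ∀ x ∈ Ioc l r,
      (g x)⁻¹ - (g r)⁻¹ ≤ -(1 / 2) * ∫ s in x..r, 1 / a s := by
    intro x hx
    have hsub : Icc x r ⊆ Ioc l r := Icc_subset_Ioc hx.1 le_rfl
    have hIoo : Ioo x r ⊆ Ioo l r := Ioo_subset_Ioo_left hx.1.le
    have := sub_le_mul_integral_one_div_of_mul_deriv_le (f := fun t => -(g t)⁻¹) hx.2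
      (ha.mono hsub) (fun t ht => hpos t (hsub ht))
      ((hgc.mono hsub).inv₀ fun t ht => (hgpos t (hsub ht)).ne').neg
      (fun t ht => ((hg t (hIoo ht)).inv (hgpos t (Ioo_subset_Ioc_self (hIoo ht))).ne').neg)
      (k := -(1 / 2)) fun t ht => by
        have hgt := hgpos t (Ioo_subset_Ioc_self (hIoo ht))
        rw [neg_div, neg_neg, mul_div_assoc', div_le_iff₀ (by positivity)]
        linarith [hle t (hIoo ht)]
    linarith
  obtain ⟨x, hxF, hx⟩ :=
    ((hF.eventually_ge_atTop (2 * (g r)⁻¹)).and (Ioc_mem_nhdsGT hlr)).exists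
  linarith [hbound x hx, inv_pos.2 (hgpos x hx)]

theorem false_of_mul_deriv_le_sub_sq {b : ℝ → ℝ} {c M : ℝ} (hlr : l < r) (hc : c < 0)
    (ha : ContinuousOn a (Ioc l r)) (hpos : ∀ x ∈ Ioc l r, 0 < a x)
    (hM : ∀ x ∈ Ioc l r, |b x| ≤ M)
    (hF : Tendsto (fun x => |∫ s in x..r, 1 / a s|) (𝓝[>] l) atTop)
    (hg : ∀ x ∈ Ioo l r, HasDerivAt g (g' x) x) (hgc : ContinuousOn g (Ioc l r))
    (hle : ∀ x ∈ Ioo l r, a x * g' x ≤ c - (g x + b x) ^ 2 / 2) : False := by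
  have hF := tendsto_integral_one_div_of_tendsto_abs hlr hpos hF
  have hgtop := tendsto_atTop_of_mul_deriv_le_neg hlr ha hpos hF hg hgc hc fun x hx =>
    (hle x hx).trans (by linarith [sq_nonneg (g x + b x)])
  obtain ⟨r', hlr', hsub⟩ := mem_nhdsGT_iff_exists_Ioc_subset.mp
    ((hgtop.eventually_ge_atTop (M + 1)).and (Ioc_mem_nhdsGT hlr))
  have hr' : r' ∈ Ioc l r := (hsub ⟨hlr', le_rfl⟩).2
  have hsubI : Ioc l r' ⊆ Ioc l r := Ioc_subset_Ioc_right hr'.2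
  refine false_of_pos_of_mul_deriv_le_neg_sq (g := fun x => g x - M) hlr' (ha.mono hsubI)
    (fun x hx => hpos x (hsubI hx)) (tendsto_integral_of_mem_Ioc
      (continuousOn_const.div ha fun x hx => (hpos x hx).ne') hr' hF)
    (fun x hx => (hg x (Ioo_subset_Ioo_right hr'.2 hx)).sub_const M)
    ((hgc.mono hsubI).sub continuousOn_const)
    (fun x hx => by linarith [(hsub hx).1]) fun x hx => ?_
  have hxI : x ∈ Ioc l r := hsubI (Ioo_subset_Ioc_self hx)
  have hgM : M + 1 ≤ g x := (hsub (Ioo_subset_Ioc_self hx)).1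
  have hsq : (g x - M) ^ 2 ≤ (g x + b x) ^ 2 :=
    pow_le_pow_left₀ (by linarith) (by linarith [neg_abs_le (b x), hM x hxI]) 2
  linarith [hle x (Ioo_subset_Ioo_right hr'.2 hx)]

end RiccatiBlowup

theorem stmt14_general (δ : ℝ) (hδ : 0 < δ) (a b H g g' : ℝ → ℝ)
    (ha : ContinuousOn a (Ioc (-1 : ℝ) (-1 + δ)))
    (hbBdd : ∃ M : ℝ, ∀ x ∈ Ioc (-1 : ℝ) (-1 + δ), |b x| ≤ M)
    (haSign : (∀ x ∈ Ioc (-1 : ℝ) (-1 + δ), 0 < a x) ∨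
      (∀ x ∈ Ioc (-1 : ℝ) (-1 + δ), a x < 0))
    (haInt : Tendsto (fun x => |∫ s in x..(-1 + δ), 1 / a s|) (𝓝[>] (-1)) atTop)
    (hg : ∀ x ∈ Ioc (-1 : ℝ) (-1 + δ),
      HasDerivWithinAt g (g' x) (Ioc (-1 : ℝ) (-1 + δ)) x)
    (heq : ∀ x ∈ Ioo (-1 : ℝ) (-1 + δ),
      a x * g' x + b x * g x + (1 / 2) * (g x) ^ 2 = H x) :
    ∀ c : ℝ, c < 0 → ∃ x ∈ Ioc (-1 : ℝ) (-1 + δ), c < H x + (1 / 2) * (b x) ^ 2 := by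
  intro c hc
  by_contra! hcon
  obtain ⟨M, hM⟩ := hbBdd
  have hlr : (-1 : ℝ) < -1 + δ := by linarith
  have hgd : ∀ x ∈ Ioo (-1 : ℝ) (-1 + δ), HasDerivAt g (g' x) x := fun x hx =>
    (hg x (Ioo_subset_Ioc_self hx)).hasDerivAt (Ioc_mem_nhds hx.1 hx.2)
  have hgc : ContinuousOn g (Ioc (-1 : ℝ) (-1 + δ)) := fun x hx => (hg x hx).continuousWithinAt
  have hle : ∀ x ∈ Ioo (-1 : ℝ) (-1 + δ), a x * g' x ≤ c - (g x + b x) ^ 2 / 2 :=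
    fun x hx => by nlinarith [heq x hx, hcon x (Ioo_subset_Ioc_self hx)]
  rcases haSign with hpos | hneg
  · exact false_of_mul_deriv_le_sub_sq hlr hc ha hpos hM haInt hgd hgc hle
  · refine false_of_mul_deriv_le_sub_sq (a := -a) (b := -b) (g := -g) (g' := -g') hlr hc ha.neg
      (fun x hx => neg_pos.2 (hneg x hx)) (fun x hx => (abs_neg (b x)).trans_le (hM x hx)) ?_
      (fun x hx => (hgd x hx).neg) hgc.neg fun x hx => ?_
    · simpa only [Pi.neg_apply, div_neg, intervalIntegral.integral_neg, abs_neg] using haInt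
    · have := hle x hx
      simp only [Pi.neg_apply]
      linarith [show (-g x + -b x) ^ 2 = (g x + b x) ^ 2 by ring]

/-- If the Riccati-type equation has a C¹ solution on (-1,-1+δ] with
|∫ₓ^{-1+δ} ds/a(s)| → ∞, then sup_{(-1,-1+δ]} (H + b²/2) ≥ 0. -/
theorem stmt14 (δ : ℝ) (hδ : 0 < δ) (a b H g g' : ℝ → ℝ)
    (ha : ContinuousOn a (Ioc (-1 : ℝ) (-1 + δ)))
    (hb : ContinuousOn b (Ioc (-1 : ℝ) (-1 + δ)))
    (hbBdd : ∃ M : ℝ, ∀ x ∈ Ioc (-1 : ℝ) (-1 + δ), |b x| ≤ M)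
    (hH : ContinuousOn H (Ioc (-1 : ℝ) (-1 + δ)))
    (haSign : (∀ x ∈ Ioc (-1 : ℝ) (-1 + δ), 0 < a x) ∨
      (∀ x ∈ Ioc (-1 : ℝ) (-1 + δ), a x < 0))
    (haInt : Tendsto (fun x => |∫ s in x..(-1 + δ), 1 / a s|) (𝓝[>] (-1)) atTop)
    (hg : ∀ x ∈ Ioc (-1 : ℝ) (-1 + δ),
      HasDerivWithinAt g (g' x) (Ioc (-1 : ℝ) (-1 + δ)) x)
    (hg' : ContinuousOn g' (Ioc (-1 : ℝ) (-1 + δ)))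
    (heq : ∀ x ∈ Ioo (-1 : ℝ) (-1 + δ),
      a x * g' x + b x * g x + (1 / 2) * (g x) ^ 2 = H x) :
    ∀ c : ℝ, c < 0 → ∃ x ∈ Ioc (-1 : ℝ) (-1 + δ), c < H x + (1 / 2) * (b x) ^ 2 :=
  stmt14_general δ hδ a b H g g' ha hbBdd haSign haInt hg heq
end

section
/- Let δ > 0, 0 ≤ b ≤ 1, and β ≥ 0. Let B, H be continuous on (-1,-1+δ] with inf_{x ∈ (-1,-1+δ]} (1+x)^{1-b}·H(x) > -∞ and lim_{x→-1⁺} (1+x)·B(x) = -β. Suppose V ∈ C¹((-1,-1+δ]) satisfies the linear equation V'(x) + B(x)·V(x) = H(x) on (-1,-1+δ). Then for every ε > 0 there exists a constant C > 0 such that V(x) ≤ C·(1+x)^{min{b,β}-ε} for all x ∈ (-1,-1+δ]. -/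
/-!
Put `γ = min b β - ε` and `ψ(x) = (1+x)^(-γ) V(x)`. Then
`ψ' = (1+x)^(-γ-1) ((1+x) H - ((1+x) B + γ) V)`, and near `-1` the coefficient `(1+x) B + γ`
is negative because `γ < β`. So wherever `ψ > 0` we get `ψ' ≥ m (1+x)^(b-1-γ)`, which is
integrable at `-1` because `γ < b`. A barrier argument against a primitive of this lower bound
shows that `ψ` is bounded above near `-1`, and by compactness on the rest of the interval.
-/

open Set Filter Topology

theorem le_max_of_hasDerivWithinAt_pos_of_gt {χ χ' : ℝ → ℝ} {a c K : ℝ} (hac : a ≤ c)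
    (hχ : ContinuousOn χ (Icc a c))
    (hχ' : ∀ t ∈ Ico a c, HasDerivWithinAt χ (χ' t) (Ici t) t)
    (hpos : ∀ t ∈ Ico a c, K < χ t → 0 < χ' t) :
    χ a ≤ max K (χ c) := by
  rcases le_or_gt (χ a) K with hle | hgt
  · exact hle.trans (le_max_left _ _)
  · -- `χ` cannot drop below the level `χ a > K`, since it is increasing whenever it touches it
    have hmono := image_le_of_deriv_right_lt_deriv_boundary (B := fun _ => -χ a) (B' := 0)
      hχ.neg (fun t ht => (hχ' t ht).neg) le_rfl (fun _ => hasDerivAt_const _ _)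
      (fun t ht hχt => by
        have := hpos t ht (by rw [neg_inj.1 hχt]; exact hgt)
        simp only [Pi.zero_apply]
        linarith)
    exact (neg_le_neg_iff.1 (hmono ⟨hac, le_rfl⟩)).trans (le_max_right _ _)

theorem bddAbove_image_Ioc_of_deriv_gt {ψ ψ' G g : ℝ → ℝ} {a c : ℝ}
    (hψ : ∀ t ∈ Ioc a c, HasDerivWithinAt ψ (ψ' t) (Ioc a c) t)
    (hG : ∀ t ∈ Ioc a c, HasDerivAt G (g t) t)
    (hGa : BddAbove (G '' Ioc a c)) (hGb : BddBelow (G '' Ioc a c))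
    (hgt : ∀ t ∈ Ioo a c, 0 < ψ t → g t < ψ' t) :
    BddAbove (ψ '' Ioc a c) := by
  obtain ⟨U, hU⟩ := hGa
  obtain ⟨L, hL⟩ := hGb
  refine ⟨U + max (-L) (ψ c - G c), ?_⟩
  rintro _ ⟨x, hx, rfl⟩
  have hsub : Icc x c ⊆ Ioc a c := Icc_subset_Ioc hx.1 le_rfl
  have hbarrier := le_max_of_hasDerivWithinAt_pos_of_gt (χ := fun t => ψ t - G t) (K := -L)
    hx.2
    (fun t ht => ((hψ t (hsub ht)).continuousWithinAt.mono hsub).sub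
      (hG t (hsub ht)).continuousAt.continuousWithinAt)
    (fun t ht => by
      have hnhds : Ioc a c ∈ 𝓝[≥] t :=
        mem_of_superset (Ico_mem_nhdsGE ht.2)
          fun y hy => ⟨hx.1.trans_le (ht.1.trans hy.1), hy.2.le⟩
      exact ((hψ t (hsub (Ico_subset_Icc_self ht))).mono_of_mem_nhdsWithin hnhds).sub
        (hG t (hsub (Ico_subset_Icc_self ht))).hasDerivWithinAt)
    (fun t ht hχt => by
      have hGt := hL ⟨t, hsub (Ico_subset_Icc_self ht), rfl⟩
      have := hgt t ⟨hx.1.trans_le ht.1, ht.2⟩ (by linarith)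
      linarith)
  have hGx := hU ⟨x, hx, rfl⟩
  linarith

theorem HasDerivWithinAt.one_add_rpow_mul {V : ℝ → ℝ} {v' γ t : ℝ} {s : Set ℝ}
    (hV : HasDerivWithinAt V v' s t) (ht : 0 < 1 + t) :
    HasDerivWithinAt (fun x => (1 + x) ^ (-γ) * V x)
      ((1 + t) ^ (-γ - 1) * ((1 + t) * v' - γ * V t)) s t := by
  refine ((((hasDerivAt_id' t).const_add 1).hasDerivWithinAt.rpow_const
    (p := -γ) (Or.inl ht.ne')).fun_mul hV).congr_deriv ?_
  rw [Real.rpow_sub_one ht.ne']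
  field_simp
  ring

theorem hasDerivAt_mul_one_add_rpow_div {c q t : ℝ} (hq : q + 1 ≠ 0) (ht : 0 < 1 + t) :
    HasDerivAt (fun x => c / (q + 1) * (1 + x) ^ (q + 1)) (c * (1 + t) ^ q) t := by
  refine ((((hasDerivAt_id' t).const_add 1).rpow_const (p := q + 1) (Or.inl ht.ne')).const_mul
    (c / (q + 1))).congr_deriv ?_
  rw [add_sub_cancel_right]
  field_simp

theorem mul_rpow_le_rpow_mul_of_linear_eq {r v v' B h m b γ : ℝ} (hr : 0 < r) (hv : 0 ≤ v)
    (heq : v' + B * v = h) (hB : r * B + γ ≤ 0) (hh : m ≤ r ^ (1 - b) * h) :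
    m * r ^ (b - 1 - γ) ≤ r ^ (-γ - 1) * (r * v' - γ * v) := by
  have hrh : m * r ^ b ≤ r * h := by
    have hsplit : r ^ (1 - b) * r ^ b = r := by
      rw [← Real.rpow_add hr, sub_add_cancel, Real.rpow_one]
    calc m * r ^ b ≤ (r ^ (1 - b) * h) * r ^ b := by gcongr
      _ = r * h := by rw [mul_right_comm, hsplit]
  have hlin : r * h ≤ r * v' - γ * v := by nlinarith
  calc m * r ^ (b - 1 - γ) = r ^ (-γ - 1) * (m * r ^ b) := by
        rw [mul_left_comm, ← Real.rpow_add hr]; ring_nf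
    _ ≤ r ^ (-γ - 1) * (r * v' - γ * v) := by gcongr; linarith

theorem bddAbove_one_add_rpow_neg_mul_of_linear_eq {B H V V' : ℝ → ℝ} {b γ m x₀ : ℝ}
    (hγb : γ < b)
    (hV : ∀ t ∈ Ioc (-1 : ℝ) x₀, HasDerivWithinAt V (V' t) (Ioc (-1 : ℝ) x₀) t)
    (heq : ∀ t ∈ Ioo (-1 : ℝ) x₀, V' t + B t * V t = H t)
    (hB : ∀ t ∈ Ioo (-1 : ℝ) x₀, (1 + t) * B t + γ ≤ 0)
    (hH : ∀ t ∈ Ioo (-1 : ℝ) x₀, m ≤ (1 + t) ^ (1 - b) * H t) :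
    BddAbove ((fun t => (1 + t) ^ (-γ) * V t) '' Ioc (-1) x₀) := by
  have hq : 0 < b - 1 - γ + 1 := by linarith
  -- the barrier is a primitive of `(m - 1) (1+t)^(b-1-γ)`, bounded since `b - 1 - γ > -1`
  have hG : ContinuousOn (fun t => (m - 1) / (b - 1 - γ + 1) * (1 + t) ^ (b - 1 - γ + 1))
      (Icc (-1) x₀) := fun t _ =>
    (continuousAt_const.mul ((continuous_const.add continuous_id).continuousAt.rpow_const
      (Or.inr hq.le))).continuousWithinAt
  refine bddAbove_image_Ioc_of_deriv_gt
    (fun t ht => (hV t ht).one_add_rpow_mul (by linarith [ht.1]))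
    (fun t ht => hasDerivAt_mul_one_add_rpow_div hq.ne' (by linarith [ht.1]))
    ((isCompact_Icc.bddAbove_image hG).mono (image_mono Ioc_subset_Icc_self))
    ((isCompact_Icc.bddBelow_image hG).mono (image_mono Ioc_subset_Icc_self)) ?_
  intro t ht hψt
  have hr : 0 < 1 + t := by linarith [ht.1]
  have hVt := pos_of_mul_pos_right hψt (Real.rpow_nonneg hr.le _)
  have hlow := mul_rpow_le_rpow_mul_of_linear_eq hr hVt.le (heq t ht) (hB t ht) (hH t ht)
  have : 0 < (1 + t) ^ (b - 1 - γ) := Real.rpow_pos_of_pos hr _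
  linarith

theorem stmt16_general (δ b β : ℝ) (hδ : 0 < δ)
    (B H V V' : ℝ → ℝ)
    (hHinf : ∃ m : ℝ, ∀ x ∈ Ioc (-1 : ℝ) (-1 + δ), m ≤ (1 + x) ^ (1 - b) * H x)
    (hBlim : Tendsto (fun x => (1 + x) * B x) (𝓝[>] (-1)) (𝓝 (-β)))
    (hV : ∀ x ∈ Ioc (-1 : ℝ) (-1 + δ),
      HasDerivWithinAt V (V' x) (Ioc (-1 : ℝ) (-1 + δ)) x)
    (heq : ∀ x ∈ Ioo (-1 : ℝ) (-1 + δ), V' x + B x * V x = H x) :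
    ∀ ε > (0 : ℝ), ∃ C > (0 : ℝ), ∀ x ∈ Ioc (-1 : ℝ) (-1 + δ),
      V x ≤ C * (1 + x) ^ (min b β - ε) := by
  intro ε _
  obtain ⟨m, hm⟩ := hHinf
  set γ := min b β - ε
  obtain ⟨x₀, hx₀, hx₀δ, hBγ⟩ : ∃ x₀, -1 < x₀ ∧ x₀ ≤ -1 + δ ∧
      ∀ t ∈ Ioo (-1 : ℝ) x₀, (1 + t) * B t + γ ≤ 0 := by
    have hγβ : -β < -γ := by have := min_le_right b β; linarith
    obtain ⟨u, hu, hsub⟩ := mem_nhdsGT_iff_exists_Ioc_subset.1 (hBlim.eventually_lt_const hγβ)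
    refine ⟨min u (-1 + δ), lt_min hu (by linarith), min_le_right _ _, fun t ht => ?_⟩
    have := hsub ⟨ht.1, ht.2.le.trans (min_le_left _ _)⟩
    simp only [mem_ofPred_eq] at this
    linarith
  have hnear : BddAbove ((fun t => (1 + t) ^ (-γ) * V t) '' Ioc (-1) x₀) :=
    bddAbove_one_add_rpow_neg_mul_of_linear_eq (by have := min_le_left b β; linarith)
      (fun t ht => (hV t ⟨ht.1, ht.2.trans hx₀δ⟩).mono (Ioc_subset_Ioc_right hx₀δ))
      (fun t ht => heq t ⟨ht.1, ht.2.trans_le hx₀δ⟩) hBγ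
      (fun t ht => hm t ⟨ht.1, ht.2.le.trans hx₀δ⟩)
  have hfar : BddAbove ((fun t => (1 + t) ^ (-γ) * V t) '' Icc x₀ (-1 + δ)) :=
    isCompact_Icc.bddAbove_image fun t ht =>
      ((hV t ⟨hx₀.trans_le ht.1, ht.2⟩).one_add_rpow_mul
        (by linarith [ht.1])).continuousWithinAt.mono (Icc_subset_Ioc hx₀ le_rfl)
  obtain ⟨C, hC⟩ := hnear.union hfar
  rw [← image_union, Ioc_union_Icc_eq_Ioc hx₀ hx₀δ] at hC
  refine ⟨max C 1, by positivity, fun x hx => ?_⟩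
  have hr : 0 < 1 + x := by linarith [hx.1]
  have hψx : (1 + x) ^ (-γ) * V x ≤ max C 1 := (hC ⟨x, hx, rfl⟩).trans (le_max_left C 1)
  rwa [Real.rpow_neg hr.le, inv_mul_le_iff₀ (Real.rpow_pos_of_pos hr _), mul_comm] at hψx

/-- Upper bound V(x) ≤ C(1+x)^{min(b,β)-ε} for solutions of V' + BV = H, when
(1+x)^{1-b}H is bounded below and (1+x)B(x) → -β with β ≥ 0. -/
theorem stmt16 (δ b β : ℝ) (hδ : 0 < δ) (hb₀ : 0 ≤ b) (hb₁ : b ≤ 1) (hβ : 0 ≤ β)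
    (B H V V' : ℝ → ℝ)
    (hB : ContinuousOn B (Ioc (-1 : ℝ) (-1 + δ)))
    (hH : ContinuousOn H (Ioc (-1 : ℝ) (-1 + δ)))
    (hHinf : ∃ m : ℝ, ∀ x ∈ Ioc (-1 : ℝ) (-1 + δ), m ≤ (1 + x) ^ (1 - b) * H x)
    (hBlim : Tendsto (fun x => (1 + x) * B x) (𝓝[>] (-1)) (𝓝 (-β)))
    (hV : ∀ x ∈ Ioc (-1 : ℝ) (-1 + δ),
      HasDerivWithinAt V (V' x) (Ioc (-1 : ℝ) (-1 + δ)) x)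
    (hV' : ContinuousOn V' (Ioc (-1 : ℝ) (-1 + δ)))
    (heq : ∀ x ∈ Ioo (-1 : ℝ) (-1 + δ), V' x + B x * V x = H x) :
    ∀ ε > (0 : ℝ), ∃ C > (0 : ℝ), ∀ x ∈ Ioc (-1 : ℝ) (-1 + δ),
      V x ≤ C * (1 + x) ^ (min b β - ε) :=
  stmt16_general δ b β hδ B H V V' hHinf hBlim hV heq
end

section
/- Let δ > 0, 0 < b ≤ 1, and β < 0. Let B, H be continuous on (-1,-1+δ] with inf_{x ∈ (-1,-1+δ]} (1+x)^{1-b}·H(x) > -∞ and lim_{x→-1⁺} (1+x)·B(x) = -β. Suppose V ∈ C¹((-1,-1+δ]) satisfies the linear equation V'(x) + B(x)·V(x) = H(x) on (-1,-1+δ) together with limsup_{x→-1⁺} V(x)·exp(∫_{-1+δ}^{x} B(s) ds) ≥ 0. Then for every ε > 0 there exists a constant C > 0 such that -V(x) ≤ C·(1+x)^{b-ε} for all x ∈ (-1,-1+δ]. -/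
/-!
With `E x = exp ∫_{-1+δ}^x B` one has `(W * E)' = (W' + B * W) * E`. Because
`(1 + x) * B x → -β > 0`, near `-1` the function `K * (1 + x) ^ b` is a supersolution of
`W' + B * W = -H`, which `-V` solves, as soon as `K * b` exceeds the lower bound of
`(1 + x) ^ (1 - b) * H`. So `(-V - K * (1 + x) ^ b) * E` is nonincreasing there, and the limsup
hypothesis forces it to be `≤ 0`; compactness covers the rest of the interval. The argument gives
`-V = O((1 + x) ^ b)`, with no loss `ε`.
-/

open Set Filter Topology

theorem hasDerivAt_exp_integral {B : ℝ → ℝ} {a c x : ℝ} (hB : ContinuousOn B (Ioc a c))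
    (hx : x ∈ Ioo a c) :
    HasDerivAt (fun y => Real.exp (∫ s in c..y, B s)) (Real.exp (∫ s in c..x, B s) * B x) x := by
  have hint : IntervalIntegrable B MeasureTheory.volume c x := by
    refine (hB.mono ?_).intervalIntegrable
    rw [uIcc_of_ge hx.2.le]
    exact Icc_subset_Ioc hx.1 le_rfl
  have hB' : ContinuousOn B (Ioo a c) := hB.mono Ioo_subset_Ioc_self
  exact (intervalIntegral.integral_hasDerivAt_right hint
    (hB'.stronglyMeasurableAtFilter isOpen_Ioo x hx)
    (hB'.continuousAt (isOpen_Ioo.mem_nhds hx))).exp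

theorem AntitoneOn.nonpos_of_frequently_lt {g : ℝ → ℝ} {a c : ℝ} (hg : AntitoneOn g (Ioc a c))
    (hfreq : ∀ η > 0, ∃ᶠ y in 𝓝[>] a, g y < η) : ∀ x ∈ Ioc a c, g x ≤ 0 := by
  intro x hx
  by_contra! hgx
  obtain ⟨y, hgy, hy⟩ := ((hfreq _ hgx).and_eventually (Ioo_mem_nhdsGT hx.1)).exists
  exact (hg ⟨hy.1, hy.2.le.trans hx.2⟩ hx hy.2.le).not_gt hgy

theorem nonpos_of_hasDerivAt_add_mul_nonpos {a c : ℝ} {f f' B E : ℝ → ℝ}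
    (hf : ∀ z ∈ Ioc a c, HasDerivAt f (f' z) z)
    (hE : ∀ z ∈ Ioc a c, HasDerivAt E (E z * B z) z) (hE_pos : ∀ z ∈ Ioc a c, 0 < E z)
    (hineq : ∀ z ∈ Ioo a c, f' z + B z * f z ≤ 0)
    (hfreq : ∀ η > 0, ∃ᶠ y in 𝓝[>] a, f y * E y < η) :
    ∀ x ∈ Ioc a c, f x ≤ 0 := by
  have hfE : ∀ z ∈ Ioc a c, HasDerivAt (fun y => f y * E y) ((f' z + B z * f z) * E z) z :=
    fun z hz => ((hf z hz).mul (hE z hz)).congr_deriv (by ring)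
  have hanti : AntitoneOn (fun y => f y * E y) (Ioc a c) := by
    refine antitoneOn_of_hasDerivWithinAt_nonpos (f' := fun z => (f' z + B z * f z) * E z)
      (convex_Ioc a c)
      (fun z hz => (hfE z hz).continuousAt.continuousWithinAt) (fun z hz => ?_) (fun z hz => ?_)
    all_goals rw [interior_Ioc] at hz
    · exact (hfE z (Ioo_subset_Ioc_self hz)).hasDerivWithinAt
    · exact mul_nonpos_of_nonpos_of_nonneg (hineq z hz) (hE_pos z (Ioo_subset_Ioc_self hz)).le
  exact fun x hx => nonpos_of_mul_nonpos_left (hanti.nonpos_of_frequently_lt hfreq x hx)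
    (hE_pos x hx)

theorem frequently_neg_lt_of_nonneg_limsup {α : Type*} {l : Filter α} {u : α → ℝ}
    (h : (0 : EReal) ≤ limsup (fun x => (u x : EReal)) l) {η : ℝ} (hη : 0 < η) :
    ∃ᶠ x in l, -η < u x := by
  have hlt : ((-η : ℝ) : EReal) < limsup (fun x => (u x : EReal)) l :=
    lt_of_lt_of_le (EReal.coe_lt_coe_iff.mpr (by linarith)) h
  exact (frequently_lt_of_lt_limsup (by isBoundedDefault) hlt).mono
    fun _ hx => EReal.coe_lt_coe_iff.mp hx

theorem neg_le_abs_mul_rpow_sub_one {m t h b : ℝ} (ht : 0 < t) (hm : m ≤ t ^ (1 - b) * h) :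
    -h ≤ |m| * t ^ (b - 1) := by
  have hinv : t ^ (b - 1) * t ^ (1 - b) = 1 := by rw [← Real.rpow_add ht]; simp
  have hpos : 0 < t ^ (b - 1) := Real.rpow_pos_of_pos ht _
  have : m * t ^ (b - 1) ≤ h := by
    calc m * t ^ (b - 1) ≤ t ^ (1 - b) * h * t ^ (b - 1) := by gcongr
      _ = h := by rw [mul_comm, ← mul_assoc, hinv, one_mul]
  linarith [mul_le_mul_of_nonneg_right (neg_le_abs m) hpos.le]

theorem rpow_le_rpow_mul_rpow_sub {t δ b ε : ℝ} (ht : 0 < t) (htδ : t ≤ δ) (hε : 0 ≤ ε) :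
    t ^ b ≤ δ ^ ε * t ^ (b - ε) := by
  calc t ^ b = t ^ ε * t ^ (b - ε) := by rw [← Real.rpow_add ht, add_sub_cancel]
    _ ≤ δ ^ ε * t ^ (b - ε) := by gcongr

theorem neg_le_mul_rpow_of_supersolution {δ b K x₁ : ℝ} {B H V V' : ℝ → ℝ}
    (hB : ContinuousOn B (Ioc (-1 : ℝ) (-1 + δ)))
    (hV : ∀ x ∈ Ioc (-1 : ℝ) (-1 + δ), HasDerivWithinAt V (V' x) (Ioc (-1 : ℝ) (-1 + δ)) x)
    (heq : ∀ x ∈ Ioo (-1 : ℝ) (-1 + δ), V' x + B x * V x = H x)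
    (hlimsup : (0 : EReal) ≤
      limsup (fun x => ((V x * Real.exp (∫ s in (-1 + δ)..x, B s) : ℝ) : EReal)) (𝓝[>] (-1)))
    (hx₁ : x₁ ∈ Ioo (-1 : ℝ) (-1 + δ)) (hK : 0 ≤ K)
    (hBx₁ : ∀ z ∈ Ioo (-1 : ℝ) x₁, 0 ≤ (1 + z) * B z)
    (hHx₁ : ∀ z ∈ Ioo (-1 : ℝ) x₁, -H z ≤ K * b * (1 + z) ^ (b - 1)) :
    ∀ x ∈ Ioc (-1 : ℝ) x₁, -V x ≤ K * (1 + x) ^ b := by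
  have hsub : Ioc (-1 : ℝ) x₁ ⊆ Ioo (-1) (-1 + δ) := Ioc_subset_Ioo_right hx₁.2
  have hVd : ∀ z ∈ Ioc (-1 : ℝ) x₁, HasDerivAt V (V' z) z := fun z hz =>
    (hV z (Ioo_subset_Ioc_self (hsub hz))).hasDerivAt (Ioc_mem_nhds (hsub hz).1 (hsub hz).2)
  have hφd : ∀ z ∈ Ioc (-1 : ℝ) x₁,
      HasDerivAt (fun y => (1 + y) ^ b) (1 * b * (1 + z) ^ (b - 1)) z := fun z hz =>
    ((hasDerivAt_id z).const_add 1).rpow_const (Or.inl (show 1 + z ≠ 0 by linarith [hz.1]))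
  suffices h : ∀ x ∈ Ioc (-1 : ℝ) x₁, -V x - K * (1 + x) ^ b ≤ 0 from
    fun x hx => by linarith [h x hx]
  refine nonpos_of_hasDerivAt_add_mul_nonpos
    (fun z hz => (hVd z hz).neg.sub ((hφd z hz).const_mul K))
    (fun z hz => hasDerivAt_exp_integral hB (hsub hz)) (fun z _ => Real.exp_pos _) ?_ ?_
  · intro z hz
    have hz1 : 0 < 1 + z := by linarith [hz.1]
    have hpow : (1 + z) ^ b = (1 + z) ^ (b - 1) * (1 + z) := by
      rw [← Real.rpow_add_one hz1.ne']; ring_nf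
    have hrest : 0 ≤ K * (1 + z) ^ (b - 1) * ((1 + z) * B z) :=
      mul_nonneg (mul_nonneg hK (Real.rpow_nonneg hz1.le _)) (hBx₁ z hz)
    rw [hpow]
    linear_combination -(heq z (hsub (Ioo_subset_Ioc_self hz))) + hHx₁ z hz + hrest
  · intro η hη
    refine ((frequently_neg_lt_of_nonneg_limsup hlimsup hη).and_eventually
      self_mem_nhdsWithin).mono fun y ⟨hy, hy1⟩ => ?_
    have hy1 : 0 ≤ 1 + y := by linarith [show -1 < y from hy1]
    have : 0 ≤ K * (1 + y) ^ b * Real.exp (∫ s in (-1 + δ)..y, B s) :=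
      mul_nonneg (mul_nonneg hK (Real.rpow_nonneg hy1 _)) (Real.exp_pos _).le
    linarith

theorem exists_neg_le_mul_rpow {δ b β : ℝ} {B H V V' : ℝ → ℝ} (hδ : 0 < δ) (hb : 0 < b)
    (hβ : β < 0) (hB : ContinuousOn B (Ioc (-1 : ℝ) (-1 + δ)))
    (hHinf : ∃ m : ℝ, ∀ x ∈ Ioc (-1 : ℝ) (-1 + δ), m ≤ (1 + x) ^ (1 - b) * H x)
    (hBlim : Tendsto (fun x => (1 + x) * B x) (𝓝[>] (-1)) (𝓝 (-β)))
    (hV : ∀ x ∈ Ioc (-1 : ℝ) (-1 + δ), HasDerivWithinAt V (V' x) (Ioc (-1 : ℝ) (-1 + δ)) x)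
    (heq : ∀ x ∈ Ioo (-1 : ℝ) (-1 + δ), V' x + B x * V x = H x)
    (hlimsup : (0 : EReal) ≤
      limsup (fun x => ((V x * Real.exp (∫ s in (-1 + δ)..x, B s) : ℝ) : EReal)) (𝓝[>] (-1))) :
    ∃ C > 0, ∀ x ∈ Ioc (-1 : ℝ) (-1 + δ), -V x ≤ C * (1 + x) ^ b := by
  obtain ⟨m, hm⟩ := hHinf
  obtain ⟨u, hu, huB⟩ := (nhdsGT_basis (-1 : ℝ)).eventually_iff.mp
    (hBlim.eventually (eventually_ge_nhds (neg_pos.mpr hβ)))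
  obtain ⟨x₁, hx₁, hx₁u⟩ := exists_between (lt_min hu (by linarith : (-1 : ℝ) < -1 + δ))
  have hx₁δ : x₁ < -1 + δ := hx₁u.trans_le (min_le_right _ _)
  have hVc : ContinuousOn V (Icc x₁ (-1 + δ)) := fun x hx =>
    (hV x ⟨hx₁.trans_le hx.1, hx.2⟩).continuousWithinAt.mono (Icc_subset_Ioc hx₁ le_rfl)
  obtain ⟨M, hM⟩ := isCompact_Icc.exists_bound_of_continuousOn hVc
  have hpow₁ : 0 < (1 + x₁) ^ b := Real.rpow_pos_of_pos (by linarith) b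
  obtain ⟨K, hK, hmK, hMK⟩ : ∃ K > 0, |m| ≤ K * b ∧ |M| ≤ K * (1 + x₁) ^ b := by
    refine ⟨|m| / b + |M| / (1 + x₁) ^ b + 1, by positivity, ?_, ?_⟩
    · rw [← div_le_iff₀ hb]; linarith [show 0 ≤ |M| / (1 + x₁) ^ b by positivity]
    · rw [← div_le_iff₀ hpow₁]; linarith [show 0 ≤ |m| / b by positivity]
  refine ⟨K, hK, fun x hx => ?_⟩
  rcases le_or_gt x x₁ with hxx₁ | hxx₁
  · refine neg_le_mul_rpow_of_supersolution hB hV heq hlimsup ⟨hx₁, hx₁δ⟩ hK.le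
      (fun z hz => huB ⟨hz.1, hz.2.trans (hx₁u.trans_le (min_le_left _ _))⟩) (fun z hz => ?_)
      x ⟨hx.1, hxx₁⟩
    have hz1 : 0 < 1 + z := by linarith [hz.1]
    calc -H z ≤ |m| * (1 + z) ^ (b - 1) :=
          neg_le_abs_mul_rpow_sub_one hz1 (hm z ⟨hz.1, (hz.2.trans hx₁δ).le⟩)
      _ ≤ K * b * (1 + z) ^ (b - 1) := by gcongr
  · calc -V x ≤ |M| := (neg_le_abs _).trans ((hM x ⟨hxx₁.le, hx.2⟩).trans (le_abs_self M))
      _ ≤ K * (1 + x₁) ^ b := hMK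
      _ ≤ K * (1 + x) ^ b := by gcongr; linarith

theorem stmt17_general (δ b β : ℝ) (hδ : 0 < δ) (hb₀ : 0 < b) (hβ : β < 0)
    (B H V V' : ℝ → ℝ)
    (hB : ContinuousOn B (Ioc (-1 : ℝ) (-1 + δ)))
    (hHinf : ∃ m : ℝ, ∀ x ∈ Ioc (-1 : ℝ) (-1 + δ), m ≤ (1 + x) ^ (1 - b) * H x)
    (hBlim : Tendsto (fun x => (1 + x) * B x) (𝓝[>] (-1)) (𝓝 (-β)))
    (hV : ∀ x ∈ Ioc (-1 : ℝ) (-1 + δ),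
      HasDerivWithinAt V (V' x) (Ioc (-1 : ℝ) (-1 + δ)) x)
    (heq : ∀ x ∈ Ioo (-1 : ℝ) (-1 + δ), V' x + B x * V x = H x)
    (hlimsup : (0 : EReal) ≤
      Filter.limsup (fun x => ((V x * Real.exp (∫ s in (-1 + δ)..x, B s) : ℝ) : EReal))
        (𝓝[>] (-1))) :
    ∀ ε > (0 : ℝ), ∃ C > (0 : ℝ), ∀ x ∈ Ioc (-1 : ℝ) (-1 + δ),
      -V x ≤ C * (1 + x) ^ (b - ε) := by
  obtain ⟨C, hC, hCV⟩ := exists_neg_le_mul_rpow hδ hb₀ hβ hB hHinf hBlim hV heq hlimsup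
  intro ε hε
  refine ⟨C * δ ^ ε, by positivity, fun x hx => ?_⟩
  calc -V x ≤ C * (1 + x) ^ b := hCV x hx
    _ ≤ C * (δ ^ ε * (1 + x) ^ (b - ε)) := by
        gcongr
        exact rpow_le_rpow_mul_rpow_sub (by linarith [hx.1]) (by linarith [hx.2]) hε.le
    _ = C * δ ^ ε * (1 + x) ^ (b - ε) := (mul_assoc _ _ _).symm

/-- Lower bound -V(x) ≤ C(1+x)^{b-ε} for solutions of V' + BV = H when β < 0,
under the limsup condition. -/
theorem stmt17 (δ b β : ℝ) (hδ : 0 < δ) (hb₀ : 0 < b) (hb₁ : b ≤ 1) (hβ : β < 0)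
    (B H V V' : ℝ → ℝ)
    (hB : ContinuousOn B (Ioc (-1 : ℝ) (-1 + δ)))
    (hH : ContinuousOn H (Ioc (-1 : ℝ) (-1 + δ)))
    (hHinf : ∃ m : ℝ, ∀ x ∈ Ioc (-1 : ℝ) (-1 + δ), m ≤ (1 + x) ^ (1 - b) * H x)
    (hBlim : Tendsto (fun x => (1 + x) * B x) (𝓝[>] (-1)) (𝓝 (-β)))
    (hV : ∀ x ∈ Ioc (-1 : ℝ) (-1 + δ),
      HasDerivWithinAt V (V' x) (Ioc (-1 : ℝ) (-1 + δ)) x)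
    (hV' : ContinuousOn V' (Ioc (-1 : ℝ) (-1 + δ)))
    (heq : ∀ x ∈ Ioo (-1 : ℝ) (-1 + δ), V' x + B x * V x = H x)
    (hlimsup : (0 : EReal) ≤
      Filter.limsup (fun x => ((V x * Real.exp (∫ s in (-1 + δ)..x, B s) : ℝ) : EReal))
        (𝓝[>] (-1))) :
    ∀ ε > (0 : ℝ), ∃ C > (0 : ℝ), ∀ x ∈ Ioc (-1 : ℝ) (-1 + δ),
      -V x ≤ C * (1 + x) ^ (b - ε) :=
  stmt17_general δ b β hδ hb₀ hβ B H V V' hB hHinf hBlim hV heq hlimsup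
end

section
/- Let δ, β, c₁, c₂ > 0. Let B be continuous on (-1,-1+δ] and H continuous on [-1,-1+δ], and suppose there exists C₀ > 0 such that |H(x) - H(-1)| ≤ C₀·(1+x)^{c₁} and |(1+x)·B(x) + β| ≤ C₀·(1+x)^{c₂} for all x ∈ (-1,-1+δ]. Suppose V ∈ C¹((-1,-1+δ]) satisfies the linear equation V'(x) + B(x)·V(x) = H(x) on (-1,-1+δ). Then there exists a constant a₁ ∈ ℝ such that for every α with 0 < α < min{c₂+β, c₂+1, c₁+1} there is C > 0 with: if β ≠ 1, |V(x) - a₁·(1+x)^{β} - (H(-1)/(1-β))·(1+x)| ≤ C·(1+x)^{α} for all x ∈ (-1,-1+δ]; and if β = 1, |V(x) - a₁·(1+x) - H(-1)·(1+x)·ln(1+x)| ≤ C·(1+x)^{α} for all x ∈ (-1,-1+δ]. -/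
/-!
Put `t = 1 + x` and write `b t = -β / t + r t`, so that `r = O(t ^ (c₂ - 1))` is integrable at `0`.
With `R t = ∫ₜ^δ r` (`perturbationIntegral`), the function `t ^ (-β) * exp (-R t)` is an
integrating factor, and
`v t = exp (R t) * t ^ β * (δ ^ (-β) * v δ - ∫ₜ^δ s ^ (-β) * exp (-R s) * h s)`.
Here `exp (R t) = exp (R 0) + O(t ^ c₂)` and `exp (-R s) * h s = g₀ + O(s ^ min c₁ c₂)` with
`g₀ = exp (-R 0) * h 0`. The error term contributes to the integral a constant plus
`O(t ^ (α - β))`, the constant being the integral over `(0, δ]` when that converges and `0`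
otherwise. The constant `g₀` contributes `g₀` times an antiderivative of `s ^ (-β)`, which yields
the term `t / (1 - β)`, or `t * log t` when `β = 1`; everything else is a multiple of `t ^ β`.
-/

open Set Filter Topology MeasureTheory Asymptotics Real

lemma rpow_le_rpow_sub_mul_rpow {t δ q α : ℝ} (ht : 0 < t) (htδ : t ≤ δ) (hαq : α ≤ q) :
    t ^ q ≤ δ ^ (q - α) * t ^ α := by
  calc t ^ q = t ^ (q - α) * t ^ α := by rw [← rpow_add ht, sub_add_cancel]
    _ ≤ δ ^ (q - α) * t ^ α := by gcongr

lemma abs_exp_sub_exp_le {a b M : ℝ} (ha : a ≤ M) (hb : b ≤ M) :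
    |exp a - exp b| ≤ exp M * |a - b| := by
  wlog hba : b ≤ a generalizing a b
  · rw [abs_sub_comm, abs_sub_comm a]
    exact this hb ha (le_of_not_ge hba)
  rw [abs_of_nonneg (sub_nonneg.2 (exp_le_exp.2 hba)), abs_of_nonneg (sub_nonneg.2 hba)]
  have hexp : exp a * (b - a + 1) ≤ exp b := by
    rw [show b = a + (b - a) by ring, exp_add, add_sub_cancel_left]
    gcongr
    linarith [add_one_le_exp (b - a)]
  calc exp a - exp b ≤ exp a * (a - b) := by nlinarith
    _ ≤ exp M * (a - b) := by gcongr

section RpowBigO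

variable {δ α : ℝ} {f : ℝ → ℝ}

lemma isBigO_principal_Ioc_rpow_iff :
    f =O[𝓟 (Ioc 0 δ)] (fun t => t ^ α) ↔ ∃ C, ∀ t ∈ Ioc 0 δ, |f t| ≤ C * t ^ α := by
  refine isBigO_principal.trans (exists_congr fun C => forall₂_congr fun t ht => ?_)
  rw [norm_eq_abs, norm_eq_abs, abs_of_pos (rpow_pos_of_pos ht.1 α)]

lemma exists_pos_bound_of_isBigO_principal_Ioc_rpow (hf : f =O[𝓟 (Ioc 0 δ)] (fun t => t ^ α)) :
    ∃ C > 0, ∀ t ∈ Ioc 0 δ, |f t| ≤ C * t ^ α := by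
  obtain ⟨C, hC, hfC⟩ := hf.exists_pos
  refine ⟨C, hC, fun t ht => ?_⟩
  simpa [abs_of_pos (rpow_pos_of_pos ht.1 α)] using isBigOWith_principal.1 hfC t ht

lemma isBigO_principal_Ioc_rpow_rpow {q : ℝ} (h : α ≤ q) :
    (fun t : ℝ => t ^ q) =O[𝓟 (Ioc 0 δ)] (fun t => t ^ α) :=
  isBigO_principal_Ioc_rpow_iff.2 ⟨δ ^ (q - α), fun t ht => by
    rw [abs_of_pos (rpow_pos_of_pos ht.1 q)]
    exact rpow_le_rpow_sub_mul_rpow ht.1 ht.2 h⟩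

lemma Asymptotics.IsBigO.mul_rpow {g : ℝ → ℝ} {a b : ℝ} (hf : f =O[𝓟 (Ioc 0 δ)] (fun t => t ^ a))
    (hg : g =O[𝓟 (Ioc 0 δ)] (fun t => t ^ b)) (hab : a + b = α) :
    (fun t => f t * g t) =O[𝓟 (Ioc 0 δ)] (fun t => t ^ α) :=
  (hf.mul hg).trans_eventuallyEq <| eventuallyEq_principal.2 fun t ht => by
    simp only [← hab, rpow_add ht.1]

lemma integrableOn_Icc_of_isBigO_rpow {q : ℝ} (hq : -1 < q) (hfc : ContinuousOn f (Ioc 0 δ))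
    (hf : f =O[𝓟 (Ioc 0 δ)] (fun t => t ^ q)) : IntegrableOn f (Icc 0 δ) := by
  obtain ⟨C, hC⟩ := isBigO_principal_Ioc_rpow_iff.1 hf
  rw [integrableOn_Icc_iff_integrableOn_Ioc]
  refine Integrable.mono' ((intervalIntegral.intervalIntegrable_rpow' hq).const_mul C).1
    (hfc.aestronglyMeasurable measurableSet_Ioc) ?_
  exact (ae_restrict_iff' measurableSet_Ioc).2 (Eventually.of_forall hC)

lemma isBigO_integral_sub_integral_of_isBigO_rpow {q : ℝ} (hq : -1 < q)
    (hfi : IntegrableOn f (Icc 0 δ)) (hf : f =O[𝓟 (Ioc 0 δ)] (fun t => t ^ q)) :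
    (fun t => (∫ s in t..δ, f s) - ∫ s in 0..δ, f s) =O[𝓟 (Ioc 0 δ)] (fun t => t ^ (q + 1)) := by
  obtain ⟨C, hC⟩ := isBigO_principal_Ioc_rpow_iff.1 hf
  refine isBigO_principal_Ioc_rpow_iff.2 ⟨C / (q + 1), fun t ht => ?_⟩
  have hδ : 0 ≤ δ := ht.1.le.trans ht.2
  have hfi' {a b : ℝ} (ha : a ∈ Icc 0 δ) (hb : b ∈ Icc 0 δ) : IntervalIntegrable f volume a b :=
    (hfi.mono_set (uIcc_subset_Icc ha hb)).intervalIntegrable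
  rw [← intervalIntegral.integral_add_adjacent_intervals (hfi' (left_mem_Icc.2 hδ)
    (Ioc_subset_Icc_self ht)) (hfi' (Ioc_subset_Icc_self ht) (right_mem_Icc.2 hδ)),
    sub_add_cancel_right, abs_neg]
  have hbound := intervalIntegral.norm_integral_le_of_norm_le (f := f) ht.1.le
    (Eventually.of_forall fun s hs => hC s ⟨hs.1, hs.2.trans ht.2⟩)
    ((intervalIntegral.intervalIntegrable_rpow' hq).const_mul C)
  rw [intervalIntegral.integral_const_mul, integral_rpow (Or.inl hq),
    zero_rpow (by linarith), norm_eq_abs] at hbound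
  calc _ ≤ _ := hbound
    _ = C / (q + 1) * t ^ (q + 1) := by ring

lemma isBigO_integral_of_isBigO_rpow_of_lt {q : ℝ} (hq : q < -1)
    (hf : f =O[𝓟 (Ioc 0 δ)] (fun t => t ^ q)) :
    (fun t => ∫ s in t..δ, f s) =O[𝓟 (Ioc 0 δ)] (fun t => t ^ (q + 1)) := by
  obtain ⟨C, hC₀, hC⟩ := exists_pos_bound_of_isBigO_principal_Ioc_rpow hf
  refine isBigO_principal_Ioc_rpow_iff.2 ⟨C / -(q + 1), fun t ht => ?_⟩
  have h0 : (0 : ℝ) ∉ uIcc t δ := by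
    rw [uIcc_of_le ht.2]; exact fun h => (lt_irrefl _ (ht.1.trans_le h.1))
  have hbound := intervalIntegral.norm_integral_le_of_norm_le (f := f) ht.2
    (Eventually.of_forall fun s hs => hC s ⟨ht.1.trans hs.1, hs.2⟩)
    ((intervalIntegral.intervalIntegrable_rpow (μ := volume) (Or.inr h0)).const_mul C)
  rw [intervalIntegral.integral_const_mul, integral_rpow (Or.inr ⟨by linarith, h0⟩),
    norm_eq_abs] at hbound
  have hδq : 0 ≤ C / -(q + 1) * δ ^ (q + 1) :=
    mul_nonneg (div_nonneg hC₀.le (by linarith)) (rpow_nonneg (ht.1.le.trans ht.2) _)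
  calc _ ≤ _ := hbound
    _ = C / -(q + 1) * t ^ (q + 1) - C / -(q + 1) * δ ^ (q + 1) := by
      field_simp; ring
    _ ≤ C / -(q + 1) * t ^ (q + 1) := by linarith

theorem exists_isBigO_rpow_mul_integral_sub {β m : ℝ} (hfc : ContinuousOn f (Ioc 0 δ))
    (hf : f =O[𝓟 (Ioc 0 δ)] (fun t => t ^ m)) :
    ∃ j, ∀ α < m + 1, (fun t => t ^ β * ((∫ s in t..δ, s ^ (-β) * f s) - j))
      =O[𝓟 (Ioc 0 δ)] (fun t => t ^ α) := by
  set g := fun s => s ^ (-β) * f s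
  have hg : g =O[𝓟 (Ioc 0 δ)] (fun t => t ^ (m - β)) :=
    (isBigO_refl _ _).mul_rpow hf (by ring)
  by_cases hβ : β < m + 1
  · have hgc : ContinuousOn g (Ioc 0 δ) :=
      (continuousOn_id.rpow_const fun s hs => Or.inl hs.1.ne').mul hfc
    have hgi := integrableOn_Icc_of_isBigO_rpow (by linarith) hgc hg
    refine ⟨∫ s in 0..δ, g s, fun α hα => ?_⟩
    exact ((isBigO_refl _ _).mul_rpow (isBigO_integral_sub_integral_of_isBigO_rpow
      (by linarith) hgi hg) (by ring)).trans (isBigO_principal_Ioc_rpow_rpow hα.le)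
  · refine ⟨0, fun α hα => ?_⟩
    have hg' := hg.trans (isBigO_principal_Ioc_rpow_rpow (by linarith : α - 1 - β ≤ m - β))
    simpa only [sub_zero] using (isBigO_refl (fun t : ℝ => t ^ β) _).mul_rpow
      (isBigO_integral_of_isBigO_rpow_of_lt (by linarith) hg') (by ring)

lemma isBigO_rpow_mul_integral_rpow_neg {β γ : ℝ} (hγ₁ : γ < 1) (hγβ : γ ≤ β) :
    (fun t => t ^ β * ∫ s in t..δ, s ^ (-β)) =O[𝓟 (Ioc 0 δ)] (fun t => t ^ γ) := by
  obtain ⟨j, hj⟩ := exists_isBigO_rpow_mul_integral_sub (δ := δ) (β := β) (m := 0)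
    (f := fun _ => 1) continuousOn_const
    (isBigO_principal_Ioc_rpow_iff.2 ⟨1, fun t _ => by simp⟩)
  have hconst := (isBigO_principal_Ioc_rpow_rpow (δ := δ) hγβ).const_mul_left j
  refine ((hj γ (by linarith)).add hconst).congr_left fun t => ?_
  simp only [mul_one]
  ring

end RpowBigO

section ExpBigO

variable {δ c u₀ : ℝ} {u : ℝ → ℝ}

lemma exists_abs_le_of_isBigO_sub (hc : 0 ≤ c)
    (hu : (fun t => u t - u₀) =O[𝓟 (Ioc 0 δ)] (fun t => t ^ c)) :
    ∃ M, ∀ t ∈ Ioc 0 δ, |u t| ≤ M ∧ |u₀| ≤ M := by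
  obtain ⟨C, hC₀, hC⟩ := exists_pos_bound_of_isBigO_principal_Ioc_rpow hu
  refine ⟨|u₀| + C * δ ^ c, fun t ht => ⟨?_, ?_⟩⟩
  · calc |u t| ≤ |u₀| + |u t - u₀| := by simpa using abs_add_le u₀ (u t - u₀)
      _ ≤ |u₀| + C * δ ^ c := by
        gcongr
        exact (hC t ht).trans (by gcongr; exacts [ht.1.le, ht.2])
  · have : 0 ≤ δ ^ c := rpow_nonneg (ht.1.le.trans ht.2) c
    nlinarith

lemma isBigO_exp_sub_exp (hc : 0 ≤ c)
    (hu : (fun t => u t - u₀) =O[𝓟 (Ioc 0 δ)] (fun t => t ^ c)) :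
    (fun t => exp (u t) - exp u₀) =O[𝓟 (Ioc 0 δ)] (fun t => t ^ c) := by
  obtain ⟨M, hM⟩ := exists_abs_le_of_isBigO_sub hc hu
  refine IsBigO.trans (isBigO_principal.2 ⟨exp M, fun t ht => ?_⟩) hu
  simpa only [norm_eq_abs] using
    abs_exp_sub_exp_le (le_of_abs_le (hM t ht).1) (le_of_abs_le (hM t ht).2)

lemma isBigO_exp_rpow_zero (hc : 0 ≤ c)
    (hu : (fun t => u t - u₀) =O[𝓟 (Ioc 0 δ)] (fun t => t ^ c)) :
    (fun t => exp (u t)) =O[𝓟 (Ioc 0 δ)] (fun t => t ^ (0 : ℝ)) := by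
  obtain ⟨M, hM⟩ := exists_abs_le_of_isBigO_sub hc hu
  refine isBigO_principal_Ioc_rpow_iff.2 ⟨exp M, fun t ht => ?_⟩
  rw [rpow_zero, mul_one, abs_of_pos (exp_pos _)]
  exact exp_le_exp.2 (le_of_abs_le (hM t ht).1)

lemma isBigO_exp_mul_sub_exp_mul {h : ℝ → ℝ} {c₁ : ℝ} (hc : 0 ≤ c)
    (hu : (fun t => u t - u₀) =O[𝓟 (Ioc 0 δ)] (fun t => t ^ c))
    (hh : (fun t => h t - h 0) =O[𝓟 (Ioc 0 δ)] (fun t => t ^ c₁)) :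
    (fun t => exp (u t) * h t - exp u₀ * h 0) =O[𝓟 (Ioc 0 δ)] (fun t => t ^ min c₁ c) := by
  refine IsBigO.congr_left ?_ (fun t => by ring : ∀ t, exp (u t) * (h t - h 0)
    + h 0 * (exp (u t) - exp u₀) = exp (u t) * h t - exp u₀ * h 0)
  exact (((isBigO_exp_rpow_zero hc hu).mul_rpow hh (zero_add c₁)).trans
    (isBigO_principal_Ioc_rpow_rpow (min_le_left _ _))).add
    (((isBigO_exp_sub_exp hc hu).const_mul_left (h 0)).trans
      (isBigO_principal_Ioc_rpow_rpow (min_le_right _ _)))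

end ExpBigO

theorem mul_eq_sub_integral_of_hasDerivAt {E b h v v' : ℝ → ℝ} {t u : ℝ} (htu : t ≤ u)
    (hE : ContinuousOn E (Icc t u)) (hv : ContinuousOn v (Icc t u))
    (hE' : ∀ s ∈ Ioo t u, HasDerivAt E (E s * b s) s)
    (hv' : ∀ s ∈ Ioo t u, HasDerivAt v (v' s) s)
    (hode : ∀ s ∈ Ioo t u, v' s + b s * v s = h s)
    (hEh : IntervalIntegrable (fun s => E s * h s) volume t u) :
    E t * v t = E u * v u - ∫ s in t..u, E s * h s := by
  have hderiv : ∀ s ∈ Ioo t u, HasDerivAt (fun s => E s * v s) (E s * h s) s := fun s hs => by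
    have := (hE' s hs).mul (hv' s hs)
    rwa [show E s * b s * v s + E s * v' s = E s * h s by rw [← hode s hs]; ring] at this
  rw [intervalIntegral.integral_eq_sub_of_hasDerivAt_of_le (f := fun s => E s * v s) htu
    (hE.mul hv) hderiv hEh]
  ring

noncomputable def perturbationIntegral (δ β : ℝ) (b : ℝ → ℝ) (t : ℝ) : ℝ :=
  ∫ s in t..δ, (b s + β / s)

section LinearODE

variable {δ β c₂ : ℝ} {b : ℝ → ℝ}

local notation "R" => perturbationIntegral δ β b

lemma continuousOn_add_div (hb : ContinuousOn b (Ioc 0 δ)) :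
    ContinuousOn (fun t => b t + β / t) (Ioc 0 δ) :=
  hb.add (continuousOn_const.div continuousOn_id fun _ ht => ht.1.ne')

lemma isBigO_add_div (hbβ : (fun t => t * b t + β) =O[𝓟 (Ioc 0 δ)] (fun t => t ^ c₂)) :
    (fun t => b t + β / t) =O[𝓟 (Ioc 0 δ)] (fun t => t ^ (c₂ - 1)) := by
  refine ((isBigO_refl (fun t : ℝ => t ^ (-1 : ℝ)) _).mul_rpow hbβ (by ring)).congr'
    (eventuallyEq_principal.2 fun t ht => ?_) EventuallyEq.rfl
  simp only [rpow_neg_one]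
  field_simp [ht.1.ne']

lemma integrableOn_add_div (hc₂ : 0 < c₂) (hb : ContinuousOn b (Ioc 0 δ))
    (hbβ : (fun t => t * b t + β) =O[𝓟 (Ioc 0 δ)] (fun t => t ^ c₂)) :
    IntegrableOn (fun t => b t + β / t) (Icc 0 δ) :=
  integrableOn_Icc_of_isBigO_rpow (by linarith) (continuousOn_add_div hb) (isBigO_add_div hbβ)

lemma isBigO_perturbationIntegral_sub (hc₂ : 0 < c₂)
    (hbβ : (fun t => t * b t + β) =O[𝓟 (Ioc 0 δ)] (fun t => t ^ c₂))
    (hr : IntegrableOn (fun t => b t + β / t) (Icc 0 δ)) :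
    (fun t => R t - R 0) =O[𝓟 (Ioc 0 δ)] (fun t => t ^ c₂) := by
  simpa only [sub_add_cancel, perturbationIntegral] using
    isBigO_integral_sub_integral_of_isBigO_rpow (by linarith) hr (isBigO_add_div hbβ)

lemma continuousOn_perturbationIntegral (hδ : 0 ≤ δ)
    (hr : IntegrableOn (fun t => b t + β / t) (Icc 0 δ)) : ContinuousOn R (Icc 0 δ) := by
  rw [← uIcc_of_le hδ] at hr ⊢
  exact intervalIntegral.continuousOn_primitive_interval_left hr

lemma hasDerivAt_perturbationIntegral (hb : ContinuousOn b (Ioc 0 δ))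
    (hr : IntegrableOn (fun t => b t + β / t) (Icc 0 δ)) {s : ℝ} (hs : s ∈ Ioo 0 δ) :
    HasDerivAt R (-(b s + β / s)) s :=
  have hr' := hr.mono_set <|
    uIcc_subset_Icc (Ioo_subset_Icc_self hs) (right_mem_Icc.2 (hs.1.trans hs.2).le)
  intervalIntegral.integral_hasDerivAt_left hr'.intervalIntegrable
    (((continuousOn_add_div hb).mono Ioo_subset_Ioc_self).stronglyMeasurableAtFilter
      isOpen_Ioo s hs)
    ((continuousOn_add_div hb).continuousAt (Ioc_mem_nhds hs.1 hs.2))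

lemma hasDerivAt_rpow_neg_mul_exp_neg_perturbationIntegral (hb : ContinuousOn b (Ioc 0 δ))
    (hr : IntegrableOn (fun t => b t + β / t) (Icc 0 δ)) {s : ℝ} (hs : s ∈ Ioo 0 δ) :
    HasDerivAt (fun s => s ^ (-β) * exp (-R s)) (s ^ (-β) * exp (-R s) * b s) s := by
  refine ((hasDerivAt_rpow_const (p := -β) (Or.inl hs.1.ne')).mul
    (hasDerivAt_perturbationIntegral hb hr hs).neg.exp).congr_deriv ?_
  rw [rpow_sub_one hs.1.ne', Pi.neg_apply]
  field_simp
  ring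

theorem eq_exp_mul_rpow_mul_sub_integral {h v v' : ℝ → ℝ} (hδ : 0 ≤ δ)
    (hb : ContinuousOn b (Ioc 0 δ)) (hh : ContinuousOn h (Ioc 0 δ))
    (hr : IntegrableOn (fun t => b t + β / t) (Icc 0 δ))
    (hv : ∀ t ∈ Ioc 0 δ, HasDerivWithinAt v (v' t) (Ioc 0 δ) t)
    (hode : ∀ t ∈ Ioo 0 δ, v' t + b t * v t = h t) {t : ℝ} (ht : t ∈ Ioc 0 δ) :
    v t = exp (R t) * t ^ β * (δ ^ (-β) * v δ - ∫ s in t..δ, s ^ (-β) * (exp (-R s) * h s)) := by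
  have hsub : Icc t δ ⊆ Ioc 0 δ := fun s hs => ⟨ht.1.trans_le hs.1, hs.2⟩
  have hE : ContinuousOn (fun s => s ^ (-β) * exp (-R s)) (Icc t δ) :=
    (continuousOn_id.rpow_const fun s hs => Or.inl (hsub hs).1.ne').mul
      ((continuousOn_perturbationIntegral hδ hr).mono (hsub.trans Ioc_subset_Icc_self)).neg.rexp
  have hsol := mul_eq_sub_integral_of_hasDerivAt ht.2 hE
    (fun s hs => (hv s (hsub hs)).continuousWithinAt.mono hsub)
    (fun s hs => hasDerivAt_rpow_neg_mul_exp_neg_perturbationIntegral hb hr ⟨ht.1.trans hs.1, hs.2⟩)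
    (fun s hs => (hv s (hsub (Ioo_subset_Icc_self hs))).hasDerivAt
      (Ioc_mem_nhds (ht.1.trans hs.1) hs.2))
    (fun s hs => hode s ⟨ht.1.trans hs.1, hs.2⟩)
    ((hE.mul (hh.mono hsub)).intervalIntegrable_of_Icc ht.2)
  have hRδ : R δ = 0 := intervalIntegral.integral_same
  simp only [hRδ, neg_zero, exp_zero, mul_one, mul_assoc] at hsol
  rw [← hsol, rpow_neg ht.1.le, exp_neg]
  field_simp [(rpow_pos_of_pos ht.1 β).ne']

end LinearODE

noncomputable def negRpowAntideriv (β t : ℝ) : ℝ :=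
  if β = 1 then log t else t ^ (1 - β) / (1 - β)

lemma integral_rpow_neg {β t δ : ℝ} (ht : 0 < t) (hδ : 0 < δ) :
    ∫ s in t..δ, s ^ (-β) = negRpowAntideriv β δ - negRpowAntideriv β t := by
  unfold negRpowAntideriv
  split_ifs with hβ
  · simp only [hβ, rpow_neg_one, integral_inv_of_pos ht hδ, log_div hδ.ne' ht.ne']
  · have h0 : (0 : ℝ) ∉ uIcc t δ := fun h => by
      rcases le_total t δ with htδ | hδt
      · rw [uIcc_of_le htδ] at h; linarith [h.1]
      · rw [uIcc_of_ge hδt] at h; linarith [h.1]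
    rw [integral_rpow (Or.inr ⟨fun h => hβ (by linarith), h0⟩), neg_add_eq_sub, sub_div]

lemma rpow_mul_negRpowAntideriv_of_ne_one {β t : ℝ} (ht : 0 < t) (hβ : β ≠ 1) :
    t ^ β * negRpowAntideriv β t = t / (1 - β) := by
  rw [negRpowAntideriv, if_neg hβ, mul_div_assoc', ← rpow_add ht, add_sub_cancel, rpow_one]

lemma integral_rpow_neg_mul_sub {φ : ℝ → ℝ} {β δ t : ℝ} (hφ : ContinuousOn φ (Ioc 0 δ)) (c : ℝ)
    (ht : t ∈ Ioc 0 δ) : ∫ s in t..δ, s ^ (-β) * (φ s - c)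
      = (∫ s in t..δ, s ^ (-β) * φ s) - c * (negRpowAntideriv β δ - negRpowAntideriv β t) := by
  have hsub : Icc t δ ⊆ Ioc 0 δ := fun s hs => ⟨ht.1.trans_le hs.1, hs.2⟩
  have hpow : ContinuousOn (fun s : ℝ => s ^ (-β)) (Icc t δ) :=
    continuousOn_id.rpow_const fun s hs => Or.inl (hsub hs).1.ne'
  have hi₁ : IntervalIntegrable (fun s => s ^ (-β) * φ s) volume t δ :=
    (hpow.mul (hφ.mono hsub)).intervalIntegrable_of_Icc ht.2
  have hi₂ : IntervalIntegrable (fun s => c * s ^ (-β)) volume t δ :=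
    (continuousOn_const.mul hpow).intervalIntegrable_of_Icc ht.2
  rw [← integral_rpow_neg ht.1 (ht.1.trans_le ht.2), ← intervalIntegral.integral_const_mul,
    ← intervalIntegral.integral_sub hi₁ hi₂]
  exact intervalIntegral.integral_congr fun s _ => by ring

theorem exists_isBigO_sub_expansion_of_linear_ode {δ β c₁ c₂ : ℝ} {b h v v' : ℝ → ℝ}
    (hδ : 0 < δ) (hc₂ : 0 < c₂) (hb : ContinuousOn b (Ioc 0 δ)) (hh : ContinuousOn h (Ioc 0 δ))
    (hbβ : (fun t => t * b t + β) =O[𝓟 (Ioc 0 δ)] (fun t => t ^ c₂))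
    (hh₀ : (fun t => h t - h 0) =O[𝓟 (Ioc 0 δ)] (fun t => t ^ c₁))
    (hv : ∀ t ∈ Ioc 0 δ, HasDerivWithinAt v (v' t) (Ioc 0 δ) t)
    (hode : ∀ t ∈ Ioo 0 δ, v' t + b t * v t = h t) :
    ∃ a, ∀ α < min (min (c₂ + β) (c₂ + 1)) (c₁ + 1),
      (fun t => v t - a * t ^ β - h 0 * (t ^ β * negRpowAntideriv β t))
        =O[𝓟 (Ioc 0 δ)] (fun t => t ^ α) := by
  have hr := integrableOn_add_div hc₂ hb hbβ
  set R := perturbationIntegral δ β b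
  have hR := isBigO_perturbationIntegral_sub hc₂ hbβ hr
  have hRneg : (fun t => -R t - -R 0) =O[𝓟 (Ioc 0 δ)] (fun t => t ^ c₂) :=
    hR.neg_left.congr_left fun t => by ring
  set g₀ := exp (-R 0) * h 0
  have hφc : ContinuousOn (fun s => exp (-R s) * h s) (Ioc 0 δ) :=
    (((continuousOn_perturbationIntegral hδ.le hr).mono Ioc_subset_Icc_self).neg.rexp).mul hh
  obtain ⟨j, hj⟩ := exists_isBigO_rpow_mul_integral_sub (β := β)
    (f := fun s => exp (-R s) * h s - g₀) (hφc.sub continuousOn_const)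
    (isBigO_exp_mul_sub_exp_mul hc₂.le hRneg hh₀)
  set k := δ ^ (-β) * v δ - j with hk
  refine ⟨exp (R 0) * k - h 0 * negRpowAntideriv β δ, fun α hα => ?_⟩
  have hα₁ : α < min c₁ c₂ + 1 := by
    rw [← min_add_add_right]; simp only [lt_min_iff] at hα ⊢; exact ⟨hα.2, hα.1.2⟩
  have hαβ : α - c₂ ≤ β := by linarith [hα.trans_le ((min_le_left _ _).trans (min_le_left _ _))]
  have hα₂ : α - c₂ < 1 := by linarith [hα.trans_le ((min_le_left _ _).trans (min_le_right _ _))]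
  have hmain : (fun t => k * t ^ β - g₀ * (t ^ β * ∫ s in t..δ, s ^ (-β)))
      =O[𝓟 (Ioc 0 δ)] (fun t => t ^ (α - c₂)) :=
    ((isBigO_principal_Ioc_rpow_rpow hαβ).const_mul_left k).sub
      ((isBigO_rpow_mul_integral_rpow_neg hα₂ hαβ).const_mul_left g₀)
  -- By the solution formula, the error is `exp (R t) - exp (R 0)` times the function in `hmain`
  -- minus `exp (R t)` times the function in `hj α`.
  refine (((isBigO_exp_sub_exp hc₂.le hR).mul_rpow hmain (by ring)).sub
    ((isBigO_exp_rpow_zero hc₂.le hR).mul_rpow (hj α hα₁) (zero_add α))).congr'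
    (eventuallyEq_principal.2 fun t ht => ?_) EventuallyEq.rfl
  have hg₀ : exp (R 0) * g₀ = h 0 := by
    rw [← mul_assoc, ← exp_add, add_neg_cancel, exp_zero, one_mul]
  rw [integral_rpow_neg_mul_sub hφc g₀ ht, integral_rpow_neg ht.1 hδ,
    eq_exp_mul_rpow_mul_sub_integral hδ.le hb hh hr hv hode ht]
  linear_combination (t ^ β * (negRpowAntideriv β δ - negRpowAntideriv β t)) * hg₀
    + (exp (R t) * t ^ β - exp (R 0) * t ^ β) * hk

theorem exists_abs_sub_expansion_le_of_linear_ode {δ β c₁ c₂ : ℝ} {b h v v' : ℝ → ℝ}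
    (hδ : 0 < δ) (hc₂ : 0 < c₂) (hb : ContinuousOn b (Ioc 0 δ)) (hh : ContinuousOn h (Ioc 0 δ))
    (hbβ : (fun t => t * b t + β) =O[𝓟 (Ioc 0 δ)] (fun t => t ^ c₂))
    (hh₀ : (fun t => h t - h 0) =O[𝓟 (Ioc 0 δ)] (fun t => t ^ c₁))
    (hv : ∀ t ∈ Ioc 0 δ, HasDerivWithinAt v (v' t) (Ioc 0 δ) t)
    (hode : ∀ t ∈ Ioo 0 δ, v' t + b t * v t = h t) :
    ∃ a₁, ∀ α < min (min (c₂ + β) (c₂ + 1)) (c₁ + 1), ∃ C > 0,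
      (β ≠ 1 → ∀ t ∈ Ioc 0 δ, |v t - a₁ * t ^ β - h 0 / (1 - β) * t| ≤ C * t ^ α) ∧
      (β = 1 → ∀ t ∈ Ioc 0 δ, |v t - a₁ * t - h 0 * t * log t| ≤ C * t ^ α) := by
  obtain ⟨a₁, ha₁⟩ := exists_isBigO_sub_expansion_of_linear_ode hδ hc₂ hb hh hbβ hh₀ hv hode
  refine ⟨a₁, fun α hα => ?_⟩
  obtain ⟨C, hC, hbound⟩ := exists_pos_bound_of_isBigO_principal_Ioc_rpow (ha₁ α hα)
  refine ⟨C, hC, fun hβ t ht => ?_, fun hβ t ht => ?_⟩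
  · convert hbound t ht using 3
    rw [rpow_mul_negRpowAntideriv_of_ne_one ht.1 hβ]
    ring
  · simpa [hβ, negRpowAntideriv, mul_assoc] using hbound t ht

theorem stmt18_general (δ β c₁ c₂ : ℝ) (hδ : 0 < δ) (hc₂ : 0 < c₂)
    (B H V V' : ℝ → ℝ)
    (hB : ContinuousOn B (Ioc (-1 : ℝ) (-1 + δ)))
    (hH : ContinuousOn H (Icc (-1 : ℝ) (-1 + δ)))
    (hO : ∃ C₀ > (0 : ℝ), ∀ x ∈ Ioc (-1 : ℝ) (-1 + δ),
      |H x - H (-1)| ≤ C₀ * (1 + x) ^ c₁ ∧ |(1 + x) * B x + β| ≤ C₀ * (1 + x) ^ c₂)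
    (hV : ∀ x ∈ Ioc (-1 : ℝ) (-1 + δ),
      HasDerivWithinAt V (V' x) (Ioc (-1 : ℝ) (-1 + δ)) x)
    (heq : ∀ x ∈ Ioo (-1 : ℝ) (-1 + δ), V' x + B x * V x = H x) :
    ∃ a₁ : ℝ, ∀ α : ℝ, 0 < α → α < min (min (c₂ + β) (c₂ + 1)) (c₁ + 1) →
      ∃ C > (0 : ℝ),
        (β ≠ 1 → ∀ x ∈ Ioc (-1 : ℝ) (-1 + δ),
          |V x - a₁ * (1 + x) ^ β - (H (-1) / (1 - β)) * (1 + x)| ≤ C * (1 + x) ^ α) ∧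
        (β = 1 → ∀ x ∈ Ioc (-1 : ℝ) (-1 + δ),
          |V x - a₁ * (1 + x) - H (-1) * (1 + x) * Real.log (1 + x)| ≤
            C * (1 + x) ^ α) := by
  obtain ⟨C₀, -, hO⟩ := hO
  have hshift : MapsTo (fun t : ℝ => t - 1) (Ioc 0 δ) (Ioc (-1) (-1 + δ)) :=
    fun t ht => ⟨by linarith [ht.1], by linarith [ht.2]⟩
  obtain ⟨a₁, ha₁⟩ := exists_abs_sub_expansion_le_of_linear_ode (c₁ := c₁)
    (b := fun t => B (t - 1)) (h := fun t => H (t - 1)) (v := fun t => V (t - 1))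
    (v' := fun t => V' (t - 1)) hδ hc₂
    (hB.comp (continuous_sub_right 1).continuousOn hshift)
    (hH.comp (continuous_sub_right 1).continuousOn (hshift.mono_right Ioc_subset_Icc_self))
    (isBigO_principal_Ioc_rpow_iff.2 ⟨C₀, fun t ht => by simpa using (hO _ (hshift ht)).2⟩)
    (isBigO_principal_Ioc_rpow_iff.2 ⟨C₀, fun t ht => by simpa using (hO _ (hshift ht)).1⟩)
    (fun t ht => ((hV _ (hshift ht)).comp t ((hasDerivWithinAt_id t _).sub_const 1)
      hshift).congr_deriv (mul_one _))
    (fun t ht => heq _ ⟨by linarith [ht.1], by linarith [ht.2]⟩)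
  refine ⟨a₁, fun α _ hα => ?_⟩
  obtain ⟨C, hC, hβ₁, hβ₂⟩ := ha₁ α hα
  have hx : ∀ x ∈ Ioc (-1 : ℝ) (-1 + δ), 1 + x ∈ Ioc 0 δ :=
    fun x hx => ⟨by linarith [hx.1], by linarith [hx.2]⟩
  exact ⟨C, hC, fun hβ x hxδ => by simpa using hβ₁ hβ _ (hx x hxδ),
    fun hβ x hxδ => by simpa using hβ₂ hβ _ (hx x hxδ)⟩

/-- Two-term asymptotic expansion for solutions of V' + BV = H when
(1+x)B(x) = -β + O((1+x)^{c₂}) and H(x) = H(-1) + O((1+x)^{c₁}), with β > 0. -/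
theorem stmt18 (δ β c₁ c₂ : ℝ) (hδ : 0 < δ) (hβ : 0 < β) (hc₁ : 0 < c₁) (hc₂ : 0 < c₂)
    (B H V V' : ℝ → ℝ)
    (hB : ContinuousOn B (Ioc (-1 : ℝ) (-1 + δ)))
    (hH : ContinuousOn H (Icc (-1 : ℝ) (-1 + δ)))
    (hO : ∃ C₀ > (0 : ℝ), ∀ x ∈ Ioc (-1 : ℝ) (-1 + δ),
      |H x - H (-1)| ≤ C₀ * (1 + x) ^ c₁ ∧ |(1 + x) * B x + β| ≤ C₀ * (1 + x) ^ c₂)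
    (hV : ∀ x ∈ Ioc (-1 : ℝ) (-1 + δ),
      HasDerivWithinAt V (V' x) (Ioc (-1 : ℝ) (-1 + δ)) x)
    (hV' : ContinuousOn V' (Ioc (-1 : ℝ) (-1 + δ)))
    (heq : ∀ x ∈ Ioo (-1 : ℝ) (-1 + δ), V' x + B x * V x = H x) :
    ∃ a₁ : ℝ, ∀ α : ℝ, 0 < α → α < min (min (c₂ + β) (c₂ + 1)) (c₁ + 1) →
      ∃ C > (0 : ℝ),
        (β ≠ 1 → ∀ x ∈ Ioc (-1 : ℝ) (-1 + δ),
          |V x - a₁ * (1 + x) ^ β - (H (-1) / (1 - β)) * (1 + x)| ≤ C * (1 + x) ^ α) ∧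
        (β = 1 → ∀ x ∈ Ioc (-1 : ℝ) (-1 + δ),
          |V x - a₁ * (1 + x) - H (-1) * (1 + x) * Real.log (1 + x)| ≤
            C * (1 + x) ^ α) :=
  stmt18_general δ β c₁ c₂ hδ hc₂ B H V V' hB hH hO hV heq
end
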